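/- arXiv:2109.10067 — 12 statements merged into one kernel-verified Lean document; each statement's English description precedes it below -/
import Mathlib

section
/- For a set C ⊆ ℝ², the following are equivalent: (1) C = C_γ^φ for some γ ∈ [π/2, π] and some φ ∈ [0, γ − π/2] \ {γ − π, π/2}; (2) C is a closed convex cone satisfying ℝ²_≥ ⊆ C and (−ℝ²_≥) ∩ C = {0}, where ℝ²_≥ denotes the nonnegative orthant. -/
open Real Set Pointwise

noncomputable section

/-- The linear map `T_γ^φ : ℝ² → ℝ²` from the paper, with `φ' = γ - π/2 - φ`. -/
def Tmap (γ φ : ℝ) (y : ℝ × ℝ) : ℝ × ℝ :=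
  (Real.cos (γ - Real.pi/2 - φ) * y.1 + Real.sin (γ - Real.pi/2 - φ) * y.2,
   Real.sin φ * y.1 + Real.cos φ * y.2)

/-- The ordering cone `C_γ^φ = {y : T_γ^φ(y) ≥ 0 componentwise}`. -/
def coneC (γ φ : ℝ) : Set (ℝ × ℝ) :=
  {y : ℝ × ℝ | 0 ≤ (Tmap γ φ y).1 ∧ 0 ≤ (Tmap γ φ y).2}

/-- The relation `y ≤_γ^φ y' ⇔ y' - y ∈ C_γ^φ`. -/
def leC (γ φ : ℝ) (y y' : ℝ × ℝ) : Prop :=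
  y' - y ∈ coneC γ φ

/-- The set of admissible rotation angles `φ ∈ [0, γ - π/2] \ {γ - π, π/2}`. -/
def PhiDomain (γ : ℝ) : Set ℝ :=
  Set.Icc 0 (γ - Real.pi/2) \ {γ - Real.pi, Real.pi/2}

/-- `x` is optimal with respect to `≤_γ^φ` (minimization). -/
def OptimalWrt (γ φ : ℝ) {X : Type} (f : X → ℝ × ℝ) (x : X) : Prop :=
  ¬ ∃ x', f x' ≠ f x ∧ leC γ φ (f x') (f x)

/-- `x` is `γ`-supported (minimization). -/
def GammaSupported (γ : ℝ) {X : Type} (f : X → ℝ × ℝ) (x : X) : Prop :=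
  ∃ φ ∈ PhiDomain γ, OptimalWrt γ φ f x

/-- `x` is efficient (minimization, componentwise order). -/
def Efficient {X : Type} (f : X → ℝ × ℝ) (x : X) : Prop :=
  ¬ ∃ x', f x' ≠ f x ∧ (f x').1 ≤ (f x).1 ∧ (f x').2 ≤ (f x).2

/-- `S` is an `α`-approximation with respect to the componentwise order (minimization). -/
def IsApprox (α : ℝ) {X : Type} (f : X → ℝ × ℝ) (S : Set X) : Prop :=
  ∀ x : X, ∃ x' ∈ S, (f x').1 ≤ α * (f x).1 ∧ (f x').2 ≤ α * (f x).2

/-- `x` is `α`-approximate for the weighted max-ordering scalarization of `I_γ^φ`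
with weights `w₁, w₂`. -/
def MaxOrdApprox (α w₁ w₂ γ φ : ℝ) {X : Type} (f : X → ℝ × ℝ) (x : X) : Prop :=
  ∀ x'' : X, max (w₁ * (Tmap γ φ (f x)).1) (w₂ * (Tmap γ φ (f x)).2) ≤
    α * max (w₁ * (Tmap γ φ (f x'')).1) (w₂ * (Tmap γ φ (f x'')).2)

/-- The weight `w₁ = √(sin φ)/√(cos φ') + √(cos φ)/√(sin φ')`. -/
def wOne (γ φ : ℝ) : ℝ :=
  Real.sqrt (Real.sin φ) / Real.sqrt (Real.cos (γ - Real.pi/2 - φ)) +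
  Real.sqrt (Real.cos φ) / Real.sqrt (Real.sin (γ - Real.pi/2 - φ))

/-- The weight `w₂ = √(sin φ')/√(cos φ) + √(cos φ')/√(sin φ)`. -/
def wTwo (γ φ : ℝ) : ℝ :=
  Real.sqrt (Real.sin (γ - Real.pi/2 - φ)) / Real.sqrt (Real.cos φ) +
  Real.sqrt (Real.cos (γ - Real.pi/2 - φ)) / Real.sqrt (Real.sin φ)

/-- `x` is optimal with respect to `≤_γ^φ` (maximization). -/
def OptimalWrtMax (γ φ : ℝ) {X : Type} (f : X → ℝ × ℝ) (x : X) : Prop :=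
  ¬ ∃ x', f x' ≠ f x ∧ leC γ φ (f x) (f x')

/-- `x` is `γ`-supported (maximization). -/
def GammaSupportedMax (γ : ℝ) {X : Type} (f : X → ℝ × ℝ) (x : X) : Prop :=
  ∃ φ ∈ PhiDomain γ, OptimalWrtMax γ φ f x

/-- `S` is an `α`-approximation with respect to the componentwise order (maximization). -/
def IsApproxMax (α : ℝ) {X : Type} (f : X → ℝ × ℝ) (S : Set X) : Prop :=
  ∀ x : X, ∃ x' ∈ S, (f x).1 ≤ α * (f x').1 ∧ (f x).2 ≤ α * (f x').2

/-!
Dividing each defining inequality of `C_γ^φ` by a positive cosine shows that `C_γ^φ` is the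
"slope cone" `{y | 0 ≤ y₁ + t y₂, 0 ≤ s y₁ + y₂}` with `s = tan φ`, `t = tan φ'`, and the
admissible parameters correspond via `arctan` exactly to the slopes `s, t ≥ 0` with `s t ≤ 1`.
Conversely, a closed convex cone `C` as in (2) is bounded by two extreme rays `(1, -s)` and
`(-t, 1)`: `s` is the largest slope with `(1, -s) ∈ C`, which exists because `C` is closed and
misses `(0, -1)`, and `s t ≤ 1` because `t • (1, -s) + (-t, 1) = (0, 1 - s t)` lies in `C`.
-/

def slopeCone (s t : ℝ) : Set (ℝ × ℝ) :=
  {y | 0 ≤ y.1 + t * y.2 ∧ 0 ≤ s * y.1 + y.2}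

def IsOrderingCone (C : Set (ℝ × ℝ)) : Prop :=
  IsClosed C ∧ Convex ℝ C ∧ (∀ c : ℝ, 0 ≤ c → ∀ y ∈ C, c • y ∈ C) ∧
    {y : ℝ × ℝ | 0 ≤ y.1 ∧ 0 ≤ y.2} ⊆ C ∧ {y : ℝ × ℝ | y.1 ≤ 0 ∧ y.2 ≤ 0} ∩ C = {0}

section Trigonometry

lemma cos_mul_add_sin_mul_nonneg_iff {θ : ℝ} (hθ : 0 < cos θ) (a b : ℝ) :
    0 ≤ cos θ * a + sin θ * b ↔ 0 ≤ a + tan θ * b := by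
  have h : cos θ * a + sin θ * b = cos θ * (a + tan θ * b) := by
    rw [tan_eq_sin_div_cos]; field_simp
  rw [h, mul_nonneg_iff_of_pos_left hθ]

lemma tan_mul_tan_le_one {x y : ℝ} (hx : 0 ≤ x) (hy : 0 ≤ y) (hxy : x + y ≤ π / 2)
    (hcx : 0 < cos x) (hcy : 0 < cos y) : tan x * tan y ≤ 1 := by
  have hcos : 0 ≤ cos x * cos y - sin x * sin y := by
    rw [← cos_add]; exact cos_nonneg_of_mem_Icc ⟨by linarith [pi_pos], hxy⟩
  rw [tan_eq_sin_div_cos, tan_eq_sin_div_cos, div_mul_div_comm, div_le_one (by positivity)]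
  linarith

lemma arctan_add_arctan_le_pi_div_two {s t : ℝ} (hs : 0 ≤ s) (hst : s * t ≤ 1) :
    arctan s + arctan t ≤ π / 2 := by
  rcases hs.eq_or_lt with rfl | hs
  · simpa using (arctan_lt_pi_div_two t).le
  · have ht : t ≤ s⁻¹ := by rw [← one_div, le_div_iff₀ hs]; linarith
    have := arctan_le_arctan_iff.2 ht
    rw [arctan_inv_of_pos hs] at this
    linarith

lemma coneC_eq_slopeCone {γ φ : ℝ} (hφ : 0 < cos φ) (hφ' : 0 < cos (γ - π / 2 - φ)) :
    coneC γ φ = slopeCone (tan φ) (tan (γ - π / 2 - φ)) := by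
  ext y
  simp only [coneC, Tmap, slopeCone, mem_ofPred_eq, cos_mul_add_sin_mul_nonneg_iff hφ',
    add_comm (sin φ * y.1), cos_mul_add_sin_mul_nonneg_iff hφ, add_comm y.2]

theorem exists_admissible_coneC_eq_iff (C : Set (ℝ × ℝ)) :
    (∃ γ ∈ Icc (π / 2) π, ∃ φ ∈ PhiDomain γ, C = coneC γ φ) ↔
      ∃ s t : ℝ, 0 ≤ s ∧ 0 ≤ t ∧ s * t ≤ 1 ∧ C = slopeCone s t := by
  constructor
  · rintro ⟨γ, ⟨hγ₁, hγ₂⟩, φ, ⟨⟨hφ₁, hφ₂⟩, hφ⟩, rfl⟩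
    simp only [mem_insert_iff, mem_singleton_iff, not_or] at hφ
    have hpi := pi_pos
    have hcφ : 0 < cos φ :=
      cos_pos_of_mem_Ioo ⟨by linarith, lt_of_le_of_ne (by linarith) hφ.2⟩
    have hcφ' : 0 < cos (γ - π / 2 - φ) :=
      cos_pos_of_mem_Ioo ⟨by linarith, lt_of_le_of_ne (by linarith) fun h ↦ hφ.1 (by linarith)⟩
    refine ⟨_, _, tan_nonneg_of_nonneg_of_le_pi_div_two hφ₁ (by linarith),
      tan_nonneg_of_nonneg_of_le_pi_div_two (by linarith) (by linarith),
      tan_mul_tan_le_one hφ₁ (by linarith) (by linarith) hcφ hcφ', coneC_eq_slopeCone hcφ hcφ'⟩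
  · rintro ⟨s, t, hs, ht, hst, rfl⟩
    have hsum := arctan_add_arctan_le_pi_div_two hs hst
    have has := arctan_nonneg.2 hs
    have hat := arctan_nonneg.2 ht
    have has' := arctan_lt_pi_div_two s
    have hat' := arctan_lt_pi_div_two t
    refine ⟨π / 2 + arctan s + arctan t, ⟨by linarith, by linarith⟩, arctan s,
      ⟨⟨has, by linarith⟩, ?_⟩, ?_⟩
    · simp only [mem_insert_iff, mem_singleton_iff, not_or]
      constructor <;> intro h <;> linarith
    · have hφ' : π / 2 + arctan s + arctan t - π / 2 - arctan s = arctan t := by ring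
      rw [coneC_eq_slopeCone (cos_arctan_pos s) (by rw [hφ']; exact cos_arctan_pos t), hφ',
        tan_arctan, tan_arctan]

end Trigonometry

section ConeGeometry

variable {C : Set (ℝ × ℝ)}

lemma isOrderingCone_slopeCone {s t : ℝ} (hs : 0 ≤ s) (ht : 0 ≤ t) :
    IsOrderingCone (slopeCone s t) := by
  refine ⟨?_, ?_, ?_, ?_, ?_⟩
  · have h₁ : Continuous fun y : ℝ × ℝ ↦ y.1 + t * y.2 := by fun_prop
    have h₂ : Continuous fun y : ℝ × ℝ ↦ s * y.1 + y.2 := by fun_prop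
    exact (isClosed_le continuous_const h₁).inter (isClosed_le continuous_const h₂)
  · rintro x ⟨hx₁, hx₂⟩ y ⟨hy₁, hy₂⟩ a b ha hb -
    simp only [slopeCone, mem_ofPred_eq, Prod.fst_add, Prod.snd_add, Prod.smul_fst,
      Prod.smul_snd, smul_eq_mul]
    constructor <;> nlinarith [mul_nonneg ha hx₁, mul_nonneg hb hy₁, mul_nonneg ha hx₂,
      mul_nonneg hb hy₂]
  · rintro c hc y ⟨hy₁, hy₂⟩
    simp only [slopeCone, mem_ofPred_eq, Prod.smul_fst, Prod.smul_snd, smul_eq_mul]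
    constructor <;> nlinarith [mul_nonneg hc hy₁, mul_nonneg hc hy₂]
  · rintro y ⟨hy₁, hy₂⟩
    exact ⟨by positivity, by positivity⟩
  · ext y
    simp only [slopeCone, mem_inter_iff, mem_ofPred_eq, mem_singleton_iff]
    constructor
    · rintro ⟨⟨hy₁, hy₂⟩, h₁, h₂⟩
      have hy₁0 : y.1 = 0 := by nlinarith [mul_nonneg ht (neg_nonneg.2 hy₂)]
      exact Prod.ext hy₁0 (by simp only [Prod.snd_zero]; nlinarith)
    · rintro rfl
      simp

lemma add_mem_of_convex_of_smul_mem (hconv : Convex ℝ C)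
    (hsmul : ∀ c : ℝ, 0 ≤ c → ∀ y ∈ C, c • y ∈ C) {x y : ℝ × ℝ} (hx : x ∈ C) (hy : y ∈ C) :
    x + y ∈ C := by
  convert hsmul 2 zero_le_two _ (hconv hx hy (by norm_num : (0 : ℝ) ≤ 1 / 2)
    (by norm_num : (0 : ℝ) ≤ 1 / 2) (by norm_num)) using 1
  module

lemma bddAbove_slopes (hC : IsClosed C) (hsmul : ∀ c : ℝ, 0 ≤ c → ∀ y ∈ C, c • y ∈ C)
    (h₀₁ : ((0 : ℝ), (-1 : ℝ)) ∉ C) : BddAbove {s : ℝ | 0 ≤ s ∧ ((1 : ℝ), -s) ∈ C} := by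
  obtain ⟨ε, hε, hball⟩ := Metric.isOpen_iff.1 hC.isOpen_compl _ h₀₁
  refine ⟨ε⁻¹, fun s ⟨_, hsC⟩ ↦ le_of_not_gt fun hεs ↦ ?_⟩
  have hs : 0 < s := (inv_pos.2 hε).trans hεs
  have hscale : s⁻¹ • ((1 : ℝ), -s) = (s⁻¹, -1) := by
    ext <;> simp [hs.ne']
  refine hball ?_ (hscale ▸ hsmul s⁻¹ (inv_nonneg.2 hs.le) _ hsC)
  rw [Metric.mem_ball, Prod.dist_eq, max_lt_iff]
  simpa [abs_of_pos hs, hε] using inv_lt_of_inv_lt₀ hε hεs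

lemma exists_max_slope (hC : IsClosed C) (hsmul : ∀ c : ℝ, 0 ≤ c → ∀ y ∈ C, c • y ∈ C)
    (h₁₀ : ((1 : ℝ), (0 : ℝ)) ∈ C) (h₀₁ : ((0 : ℝ), (-1 : ℝ)) ∉ C) :
    ∃ s, 0 ≤ s ∧ ((1 : ℝ), -s) ∈ C ∧ ∀ y ∈ C, 0 < y.1 → -y.2 ≤ s * y.1 := by
  set A := {s : ℝ | 0 ≤ s ∧ ((1 : ℝ), -s) ∈ C}
  have hA : IsClosed A :=
    (isClosed_le continuous_const continuous_id).inter (hC.preimage (by fun_prop))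
  have hbdd := bddAbove_slopes hC hsmul h₀₁
  obtain ⟨hs, hsC⟩ : sSup A ∈ A := hA.csSup_mem ⟨0, le_rfl, by simpa using h₁₀⟩ hbdd
  refine ⟨sSup A, hs, hsC, fun y hy hy₁ ↦ ?_⟩
  rw [← div_le_iff₀ hy₁]
  by_contra! hlt
  refine not_le.2 hlt (le_csSup hbdd ⟨hs.trans hlt.le, ?_⟩)
  convert hsmul y.1⁻¹ (inv_nonneg.2 hy₁.le) y hy using 1
  ext <;> simp [hy₁.ne', div_eq_inv_mul]

lemma add_mul_nonneg_of_slope_bounds {a b s t : ℝ} (ht : 0 ≤ t) (hst : s * t ≤ 1)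
    (ha : 0 < a → -b ≤ s * a) (hb : 0 < b → -a ≤ t * b) (hab : a ≤ 0 → b ≤ 0 → a = 0 ∧ b = 0) :
    0 ≤ a + t * b := by
  rcases lt_or_ge 0 b with hb₀ | hb₀
  · linarith [hb hb₀]
  rcases lt_or_ge 0 a with ha₀ | ha₀
  · nlinarith [mul_le_mul_of_nonneg_left (ha ha₀) ht, mul_le_mul_of_nonneg_right hst ha₀.le]
  · obtain ⟨rfl, rfl⟩ := hab ha₀ hb₀
    simp

lemma slopeCone_subset {s t : ℝ} (ht : 0 ≤ t) (hadd : ∀ x ∈ C, ∀ y ∈ C, x + y ∈ C)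
    (hsmul : ∀ c : ℝ, 0 ≤ c → ∀ y ∈ C, c • y ∈ C) (hsC : ((1 : ℝ), -s) ∈ C)
    (htC : ((-t : ℝ), (1 : ℝ)) ∈ C) (h₁₀ : ((1 : ℝ), (0 : ℝ)) ∈ C)
    (h₀₁ : ((0 : ℝ), (1 : ℝ)) ∈ C) : slopeCone s t ⊆ C := by
  rintro y ⟨h₁, h₂⟩
  rcases le_or_gt 0 y.1 with hy₁ | hy₁
  · have hy : y = y.1 • ((1 : ℝ), -s) + (s * y.1 + y.2) • ((0 : ℝ), (1 : ℝ)) :=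
      Prod.ext (by simp) (by simp; ring)
    rw [hy]
    exact hadd _ (hsmul _ hy₁ _ hsC) _ (hsmul _ h₂ _ h₀₁)
  · have hy₂ : 0 ≤ y.2 := by nlinarith
    have hy : y = y.2 • ((-t : ℝ), (1 : ℝ)) + (y.1 + t * y.2) • ((1 : ℝ), (0 : ℝ)) :=
      Prod.ext (by simp; ring) (by simp)
    rw [hy]
    exact hadd _ (hsmul _ hy₂ _ htC) _ (hsmul _ h₁ _ h₁₀)

theorem IsOrderingCone.exists_slopeCone_eq (hC : IsOrderingCone C) :
    ∃ s t : ℝ, 0 ≤ s ∧ 0 ≤ t ∧ s * t ≤ 1 ∧ C = slopeCone s t := by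
  obtain ⟨hclosed, hconv, hsmul, hnonneg, hnonpos⟩ := hC
  have hadd : ∀ x ∈ C, ∀ y ∈ C, x + y ∈ C := fun x hx y hy ↦
    add_mem_of_convex_of_smul_mem hconv hsmul hx hy
  have hpointed (y) (hy : y ∈ C) (h₁ : y.1 ≤ 0) (h₂ : y.2 ≤ 0) : y = 0 :=
    hnonpos.subset ⟨⟨h₁, h₂⟩, hy⟩
  have h₁₀ : ((1 : ℝ), (0 : ℝ)) ∈ C := hnonneg ⟨zero_le_one, le_rfl⟩
  have h₀₁ : ((0 : ℝ), (1 : ℝ)) ∈ C := hnonneg ⟨le_rfl, zero_le_one⟩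
  obtain ⟨s, hs, hsC, hsB⟩ := exists_max_slope hclosed hsmul h₁₀
    fun h ↦ by simpa using hpointed _ h le_rfl (by norm_num)
  obtain ⟨t, ht, htC, htB⟩ := exists_max_slope (hclosed.preimage continuous_swap)
    (fun c hc y hy ↦ hsmul c hc y.swap hy) h₀₁
    fun h ↦ by simpa using hpointed _ h (by norm_num) le_rfl
  have hst : s * t ≤ 1 := by
    by_contra! h
    have hsum : t • ((1 : ℝ), -s) + ((-t : ℝ), (1 : ℝ)) = (0, 1 - s * t) :=
      Prod.ext (by simp) (by simp; ring)
    have := hpointed _ (hsum ▸ hadd _ (hsmul t ht _ hsC) _ htC) le_rfl (by dsimp only; linarith)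
    simp only [Prod.ext_iff, Prod.snd_zero] at this
    linarith [this.2]
  refine ⟨s, t, hs, ht, hst, subset_antisymm (fun y hy ↦ ?_)
    (slopeCone_subset ht hadd hsmul hsC htC h₁₀ h₀₁)⟩
  have hab (h₁ : y.1 ≤ 0) (h₂ : y.2 ≤ 0) : y.1 = 0 ∧ y.2 = 0 :=
    Prod.ext_iff.1 (hpointed y hy h₁ h₂)
  refine ⟨add_mul_nonneg_of_slope_bounds ht hst (hsB y hy) (htB y.swap hy) hab, ?_⟩
  rw [add_comm]
  exact add_mul_nonneg_of_slope_bounds hs (by linarith) (htB y.swap hy) (hsB y hy)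
    fun h₂ h₁ ↦ (hab h₁ h₂).symm

end ConeGeometry

/-- `C = C_γ^φ` for some admissible `γ, φ` iff `C` is a closed convex cone
containing the nonnegative orthant and meeting the nonpositive orthant only in `0`. -/
theorem stmt_1 (C : Set (ℝ × ℝ)) :
    (∃ γ ∈ Set.Icc (Real.pi/2) Real.pi, ∃ φ ∈ PhiDomain γ, C = coneC γ φ) ↔
      (IsClosed C ∧ Convex ℝ C ∧ (∀ c : ℝ, 0 ≤ c → ∀ y ∈ C, c • y ∈ C) ∧
        {y : ℝ × ℝ | 0 ≤ y.1 ∧ 0 ≤ y.2} ⊆ C ∧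
        {y : ℝ × ℝ | y.1 ≤ 0 ∧ y.2 ≤ 0} ∩ C = {0}) := by
  rw [exists_admissible_coneC_eq_iff]
  exact ⟨fun ⟨s, t, hs, ht, _, hC⟩ ↦ hC ▸ isOrderingCone_slopeCone hs ht,
    IsOrderingCone.exists_slopeCone_eq⟩
end
end

section
/- Let γ₁, γ₂ ∈ [π/2, π], φ₁ ∈ [0, γ₁ − π/2] \ {γ₁ − π, π/2}, and φ₂ ∈ [0, γ₂ − π/2] \ {γ₂ − π, π/2} with φ₁ ≤ φ₂ and φ₁' ≤ φ₂' (where φᵢ' := γᵢ − π/2 − φᵢ). Then C_{γ₁}^{φ₁} ⊆ C_{γ₂}^{φ₂}, and for any instance (X, f) of a biobjective minimization problem, any α ≥ 1, and any x, x' ∈ X: if x' is α-approximated by x with respect to ≤_{γ₁}^{φ₁}, then x' is α-approximated by x with respect to ≤_{γ₂}^{φ₂}. -/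
open Real Set Pointwise

noncomputable section

/-! The cone `C_γ^φ` is the intersection of the half-planes with inner normals at the angles
`φ'` and `π/2 - φ`. The hypotheses place both normal angles of `C_{γ₂}^{φ₂}` inside the arc
`[φ₁', π/2 - φ₁]` spanned by those of `C_{γ₁}^{φ₁}`, an arc of length `π - γ₁ < π`, and a
half-plane whose normal lies between two normals at angular distance less than `π` contains
the intersection of the two corresponding half-planes. -/

lemma cos_mul_add_sin_mul_nonneg_of_mem_Icc {a b θ x y : ℝ} (hab : b - a < π)
    (haθ : a ≤ θ) (hθb : θ ≤ b)
    (ha : 0 ≤ cos a * x + sin a * y) (hb : 0 ≤ cos b * x + sin b * y) :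
    0 ≤ cos θ * x + sin θ * y := by
  rcases haθ.eq_or_lt with rfl | haθ
  · exact ha
  have hsin_pos : 0 < sin (b - a) := sin_pos_of_pos_of_lt_pi (by linarith) hab
  have hsin_bθ : 0 ≤ sin (b - θ) := sin_nonneg_of_nonneg_of_le_pi (by linarith) (by linarith)
  have hsin_θa : 0 ≤ sin (θ - a) := sin_nonneg_of_nonneg_of_le_pi (by linarith) (by linarith)
  have hcomb : sin (b - a) * (cos θ * x + sin θ * y)
      = sin (b - θ) * (cos a * x + sin a * y) + sin (θ - a) * (cos b * x + sin b * y) := by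
    simp only [sin_sub]
    ring
  refine nonneg_of_mul_nonneg_right ?_ hsin_pos
  rw [hcomb]
  exact add_nonneg (mul_nonneg hsin_bθ ha) (mul_nonneg hsin_θa hb)

lemma Tmap_snd (γ φ : ℝ) (y : ℝ × ℝ) :
    (Tmap γ φ y).2 = cos (π / 2 - φ) * y.1 + sin (π / 2 - φ) * y.2 := by
  rw [cos_pi_div_two_sub, sin_pi_div_two_sub]
  rfl

lemma coneC_subset_coneC {γ₁ γ₂ φ₁ φ₂ : ℝ} (hγ₁ : π / 2 ≤ γ₁) (hγ₂ : γ₂ ≤ π)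
    (hle : φ₁ ≤ φ₂) (hle' : γ₁ - π / 2 - φ₁ ≤ γ₂ - π / 2 - φ₂) :
    coneC γ₁ φ₁ ⊆ coneC γ₂ φ₂ := by
  rintro y ⟨h₁, h₂⟩
  rw [Tmap_snd] at h₂
  have hwidth : π / 2 - φ₁ - (γ₁ - π / 2 - φ₁) < π := by linarith [pi_pos]
  refine ⟨?_, ?_⟩
  · exact cos_mul_add_sin_mul_nonneg_of_mem_Icc hwidth hle' (by linarith) h₁ h₂
  · rw [Tmap_snd]
    exact cos_mul_add_sin_mul_nonneg_of_mem_Icc hwidth (by linarith) (by linarith) h₁ h₂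

theorem stmt_2_general (γ₁ γ₂ φ₁ φ₂ : ℝ)
    (hγ₁ : γ₁ ∈ Set.Icc (Real.pi/2) Real.pi) (hγ₂ : γ₂ ∈ Set.Icc (Real.pi/2) Real.pi)
    (hle : φ₁ ≤ φ₂) (hle' : γ₁ - Real.pi/2 - φ₁ ≤ γ₂ - Real.pi/2 - φ₂) :
    coneC γ₁ φ₁ ⊆ coneC γ₂ φ₂ ∧
      ∀ (X : Type), Nonempty X → ∀ f : X → ℝ × ℝ,
        (∀ x, 0 < (f x).1 ∧ 0 < (f x).2) →
        ∀ α : ℝ, 1 ≤ α → ∀ x x' : X,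
          leC γ₁ φ₁ (f x) (α • f x') → leC γ₂ φ₂ (f x) (α • f x') := by
  have hcone := coneC_subset_coneC hγ₁.1 hγ₂.2 hle hle'
  exact ⟨hcone, fun _ _ _ _ _ _ _ _ h => hcone h⟩

/-- if `φ₁ ≤ φ₂` and `φ₁' ≤ φ₂'` then `C_{γ₁}^{φ₁} ⊆ C_{γ₂}^{φ₂}`, and
`α`-approximation with respect to `≤_{γ₁}^{φ₁}` implies `α`-approximation with respect
to `≤_{γ₂}^{φ₂}`. -/
theorem stmt_2 (γ₁ γ₂ φ₁ φ₂ : ℝ)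
    (hγ₁ : γ₁ ∈ Set.Icc (Real.pi/2) Real.pi) (hγ₂ : γ₂ ∈ Set.Icc (Real.pi/2) Real.pi)
    (hφ₁ : φ₁ ∈ PhiDomain γ₁) (hφ₂ : φ₂ ∈ PhiDomain γ₂)
    (hle : φ₁ ≤ φ₂) (hle' : γ₁ - Real.pi/2 - φ₁ ≤ γ₂ - Real.pi/2 - φ₂) :
    coneC γ₁ φ₁ ⊆ coneC γ₂ φ₂ ∧
      ∀ (X : Type), Nonempty X → ∀ f : X → ℝ × ℝ,
        (∀ x, 0 < (f x).1 ∧ 0 < (f x).2) →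
        ∀ α : ℝ, 1 ≤ α → ∀ x x' : X,
          leC γ₁ φ₁ (f x) (α • f x') → leC γ₂ φ₂ (f x) (α • f x') :=
  stmt_2_general γ₁ γ₂ φ₁ φ₂ hγ₁ hγ₂ hle hle'
end
end

section
/- For every γ ∈ (π/2, π], every φ ∈ [0, γ − π/2] \ {γ − π, π/2}, and every α ≥ 1, there exists an instance (X, f) of a biobjective minimization problem such that the set of solutions that are optimal with respect to ≤_γ^φ is not an α-approximation with respect to the componentwise order ≤. -/
/-!
For `γ > π/2` the cone `C_γ^φ` is strictly larger than the nonnegative orthant: `T_γ^φ` maps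
`(-sin φ', cos φ')` to `(0, sin γ)` and `(cos φ, -sin φ)` to `(sin γ, 0)`, and since
`φ + φ' = γ - π/2 > 0`, one of these two vectors has a negative coordinate. Along such a direction
`v` a point `q` is dominated by `p = q - α • v`, and `p` can be chosen worse than `q` by a factor
larger than `α` in the negative coordinate of `v`. In the instance `{p, q}` only `p` can be optimal,
and it does not `α`-approximate `q`.
-/



open Real Set Pointwise

noncomputable section

theorem smul_mem_coneC {γ φ c : ℝ} {v : ℝ × ℝ} (hc : 0 ≤ c) (hv : v ∈ coneC γ φ) :
    c • v ∈ coneC γ φ := by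
  obtain ⟨h1, h2⟩ := hv
  simp only [coneC, Tmap, mem_ofPred_eq, Prod.smul_fst, Prod.smul_snd, smul_eq_mul] at h1 h2 ⊢
  constructor <;> nlinarith

theorem neg_sin_cos_mem_coneC {γ φ : ℝ} (hγ : 0 ≤ sin γ) :
    (-sin (γ - π/2 - φ), cos (γ - π/2 - φ)) ∈ coneC γ φ := by
  have hsum : cos (φ + (γ - π/2 - φ)) = sin γ := by
    rw [show φ + (γ - π/2 - φ) = γ - π/2 by ring, cos_sub_pi_div_two]
  rw [cos_add] at hsum
  refine ⟨?_, ?_⟩ <;> simp only [Tmap] <;> linarith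

theorem cos_neg_sin_mem_coneC {γ φ : ℝ} (hγ : 0 ≤ sin γ) :
    (cos φ, -sin φ) ∈ coneC γ φ := by
  have hsum : cos ((γ - π/2 - φ) + φ) = sin γ := by
    rw [show (γ - π/2 - φ) + φ = γ - π/2 by ring, cos_sub_pi_div_two]
  rw [cos_add] at hsum
  refine ⟨?_, ?_⟩ <;> simp only [Tmap] <;> linarith

theorem exists_not_isApprox_of_leC {γ φ α : ℝ} {p q : ℝ × ℝ} (hp : 0 < p.1 ∧ 0 < p.2)
    (hq : 0 < q.1 ∧ 0 < q.2) (hpq : p ≠ q) (hdom : leC γ φ p q)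
    (hfar : ¬ (p.1 ≤ α * q.1 ∧ p.2 ≤ α * q.2)) :
    ∃ (X : Type) (f : X → ℝ × ℝ), Nonempty X ∧
      (∀ x, 0 < (f x).1 ∧ 0 < (f x).2) ∧
      ¬ IsApprox α f {x : X | OptimalWrt γ φ f x} := by
  refine ⟨Bool, fun b => cond b p q, ⟨true⟩, fun b => by cases b <;> assumption, fun h => ?_⟩
  obtain ⟨x, hx, h1, h2⟩ := h false
  cases x with
  | true => exact hfar ⟨h1, h2⟩
  | false => exact hx ⟨true, hpq, hdom⟩

theorem exists_not_isApprox_of_mem_coneC_of_fst_neg {γ φ α : ℝ} {v : ℝ × ℝ} (hα : 0 < α)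
    (hv : v ∈ coneC γ φ) (hv₁ : v.1 < 0) (hv₂ : 0 ≤ v.2) :
    ∃ (X : Type) (f : X → ℝ × ℝ), Nonempty X ∧
      (∀ x, 0 < (f x).1 ∧ 0 < (f x).2) ∧
      ¬ IsApprox α f {x : X | OptimalWrt γ φ f x} := by
  refine exists_not_isApprox_of_leC (p := (-(1 + α) * v.1, -v.1)) (q := (-v.1, -v.1 + α * v.2))
    ⟨by nlinarith, by linarith⟩ ⟨by linarith, by nlinarith⟩ ?_ ?_ ?_
  · simp only [ne_eq, Prod.ext_iff, not_and]
    intro _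
    nlinarith
  · unfold leC
    convert smul_mem_coneC hα.le hv using 1
    ext <;> simp only [Prod.fst_sub, Prod.snd_sub, Prod.smul_fst, Prod.smul_snd, smul_eq_mul] <;> ring
  · simp only [not_and, not_le]
    intro
    nlinarith

theorem exists_not_isApprox_of_mem_coneC_of_snd_neg {γ φ α : ℝ} {v : ℝ × ℝ} (hα : 0 < α)
    (hv : v ∈ coneC γ φ) (hv₁ : 0 ≤ v.1) (hv₂ : v.2 < 0) :
    ∃ (X : Type) (f : X → ℝ × ℝ), Nonempty X ∧
      (∀ x, 0 < (f x).1 ∧ 0 < (f x).2) ∧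
      ¬ IsApprox α f {x : X | OptimalWrt γ φ f x} := by
  refine exists_not_isApprox_of_leC (p := (-v.2, -(1 + α) * v.2)) (q := (-v.2 + α * v.1, -v.2))
    ⟨by linarith, by nlinarith⟩ ⟨by nlinarith, by linarith⟩ ?_ ?_ ?_
  · simp only [ne_eq, Prod.ext_iff, not_and]
    intro _
    nlinarith
  · unfold leC
    convert smul_mem_coneC hα.le hv using 1
    ext <;> simp only [Prod.fst_sub, Prod.snd_sub, Prod.smul_fst, Prod.smul_snd, smul_eq_mul] <;> ring
  · simp only [not_and, not_le]
    intro
    nlinarith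

/-- for every `γ ∈ (π/2, π]`, admissible `φ`, and `α ≥ 1`, there is an
instance where the set of solutions optimal with respect to `≤_γ^φ` is not an
`α`-approximation with respect to the componentwise order. -/
theorem stmt_4 (γ φ α : ℝ) (hγ : γ ∈ Set.Ioc (Real.pi/2) Real.pi)
    (hφ : φ ∈ PhiDomain γ) (hα : 1 ≤ α) :
    ∃ (X : Type) (f : X → ℝ × ℝ), Nonempty X ∧
      (∀ x, 0 < (f x).1 ∧ 0 < (f x).2) ∧
      ¬ IsApprox α f {x : X | OptimalWrt γ φ f x} := by
  obtain ⟨hγ₁, hγ₂⟩ := hγ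
  obtain ⟨⟨hφ₀, hφγ⟩, -⟩ := hφ
  have hsinγ : 0 ≤ sin γ := sin_nonneg_of_nonneg_of_le_pi (by linarith [pi_pos]) hγ₂
  rcases (sub_nonneg.2 hφγ).eq_or_lt with hφ' | hφ'
  · refine exists_not_isApprox_of_mem_coneC_of_snd_neg (by linarith) (cos_neg_sin_mem_coneC hsinγ)
      (cos_nonneg_of_mem_Icc ⟨by linarith, by linarith⟩) ?_
    simpa using sin_pos_of_pos_of_lt_pi (x := φ) (by linarith) (by linarith)
  · refine exists_not_isApprox_of_mem_coneC_of_fst_neg (by linarith) (neg_sin_cos_mem_coneC hsinγ)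
      ?_ (cos_nonneg_of_mem_Icc ⟨by linarith, by linarith⟩)
    simpa using sin_pos_of_pos_of_lt_pi hφ' (by linarith)
end
end

section
/- Let (X, f) be an instance of a biobjective minimization problem such that f(X) + ℝ²_≥ is closed. Let X_W ⊆ X be a set of solutions that, for every φ ∈ (0, π/2), contains a solution minimizing sin(φ)·f₁(x) + cos(φ)·f₂(x) over x ∈ X. Then X_W is a 2-approximation with respect to the componentwise order ≤. -/
open Real Set Pointwise

noncomputable section

/- Choosing `φ` with `tan φ = f₂(x) / f₁(x)` balances the two weighted objectives at `f x`, so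
each one is at most half of the weighted sum there; a minimizer of that weighted sum therefore
exceeds neither objective of `x` by more than a factor of 2. -/

lemma le_two_mul_of_balanced_weighted_sum_le {s c a b u v : ℝ} (hs : 0 < s) (hc : 0 < c)
    (hu : 0 ≤ u) (hv : 0 ≤ v) (hbal : s * a = c * b)
    (hle : s * u + c * v ≤ s * a + c * b) : u ≤ 2 * a ∧ v ≤ 2 * b := by
  constructor
  · refine le_of_mul_le_mul_left ?_ hs
    linarith [mul_nonneg hc.le hv]
  · refine le_of_mul_le_mul_left ?_ hc
    linarith [mul_nonneg hs.le hu]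

lemma exists_angle_sin_mul_eq_cos_mul {a b : ℝ} (ha : 0 < a) (hb : 0 < b) :
    ∃ φ ∈ Ioo 0 (π / 2), sin φ * a = cos φ * b := by
  refine ⟨arctan (b / a), ⟨?_, arctan_lt_pi_div_two _⟩, ?_⟩
  · rw [← arctan_zero]
    exact arctan_strictMono (div_pos hb ha)
  · have hcos : cos (arctan (b / a)) ≠ 0 := (cos_arctan_pos _).ne'
    have htan : sin (arctan (b / a)) / cos (arctan (b / a)) = b / a := by
      rw [← tan_eq_sin_div_cos, tan_arctan]
    field_simp at htan
    linarith

theorem stmt_5_general (X : Type) (f : X → ℝ × ℝ)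
    (hf : ∀ x, 0 < (f x).1 ∧ 0 < (f x).2)
    (W : Set X)
    (hW : ∀ φ ∈ Set.Ioo 0 (Real.pi/2), ∃ x ∈ W, ∀ x' : X,
      Real.sin φ * (f x).1 + Real.cos φ * (f x).2 ≤
        Real.sin φ * (f x').1 + Real.cos φ * (f x').2) :
    IsApprox 2 f W := by
  intro x
  obtain ⟨φ, hφ, hbal⟩ := exists_angle_sin_mul_eq_cos_mul (hf x).1 (hf x).2
  obtain ⟨x', hx'W, hmin⟩ := hW φ hφ
  obtain ⟨hφ0, hφlt⟩ := hφ
  have hsin : 0 < sin φ := sin_pos_of_pos_of_lt_pi hφ0 (by linarith [pi_pos])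
  have hcos : 0 < cos φ := cos_pos_of_mem_Ioo ⟨by linarith, hφlt⟩
  exact ⟨x', hx'W, le_two_mul_of_balanced_weighted_sum_le hsin hcos (hf x').1.le (hf x').2.le
    hbal (hmin x)⟩

/-- a set containing, for every `φ ∈ (0, π/2)`, a minimizer of the weighted
sum `sin φ · f₁ + cos φ · f₂` is a `2`-approximation. -/
theorem stmt_5 (X : Type) (hX : Nonempty X) (f : X → ℝ × ℝ)
    (hf : ∀ x, 0 < (f x).1 ∧ 0 < (f x).2)
    (hclosed : IsClosed (Set.range f + {y : ℝ × ℝ | 0 ≤ y.1 ∧ 0 ≤ y.2}))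
    (W : Set X)
    (hW : ∀ φ ∈ Set.Ioo 0 (Real.pi/2), ∃ x ∈ W, ∀ x' : X,
      Real.sin φ * (f x).1 + Real.cos φ * (f x).2 ≤
        Real.sin φ * (f x').1 + Real.cos φ * (f x').2) :
    IsApprox 2 f W :=
  stmt_5_general X f hf W hW
end
end

section
/- For every γ ∈ (π/2, π) and every α ≥ 1, there exists an instance (X, f) of a biobjective minimization problem with exactly two solutions x₁, x₂ such that x₁ is optimal with respect to ≤_γ^φ for every φ ∈ [0, γ − π/2], but the set {x₁} is not an α-approximation with respect to the componentwise order ≤. (Concretely, one may take f(x₁) = (α + 1, 1) and f(x₂) = (1, (−cos γ / sin γ)·(α + 1) + 1).) -/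
/-
Write `f(x₁) = (α + 1, 1)` and `f(x₂) = (1, c(α + 1) + 1)` with `c = -cot γ > 0`. Multiplied by
`sin γ > 0`, the second coordinate of `T_γ^φ(f(x₁) - f(x₂))` is `α cos(γ - φ) + cos γ cos φ`, which
is negative for `φ ∈ [0, γ - π/2]` because `γ - φ ∈ [π/2, γ]`; so `f(x₂)` never dominates `f(x₁)`.
On the other hand `f₁(x₁) = α + 1 > α f₁(x₂)`, so `x₂` is not `α`-approximated by `x₁`.
-/

open Real Set Pointwise

noncomputable section

lemma neg_cos_div_sin_pos {γ : ℝ} (hγ : γ ∈ Ioo (π / 2) π) : 0 < -cos γ / sin γ :=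
  div_pos (neg_pos.2 (cos_neg_of_pi_div_two_lt_of_lt hγ.1 (by linarith [hγ.2, pi_pos])))
    (sin_pos_of_pos_of_lt_pi (by linarith [hγ.1, pi_pos]) hγ.2)

lemma sin_mul_add_cos_mul_cos_div_sin_neg {γ φ a : ℝ} (hγ : γ ∈ Ioo (π / 2) π)
    (hφ : φ ∈ Icc 0 (γ - π / 2)) (ha : 0 ≤ a) :
    sin φ * a + cos φ * (cos γ / sin γ * (a + 1)) < 0 := by
  obtain ⟨hγ₁, hγ₂⟩ := hγ
  obtain ⟨hφ₀, hφ₁⟩ := hφ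
  have hπ := pi_pos
  have hsin : 0 < sin γ := sin_pos_of_pos_of_lt_pi (by linarith) hγ₂
  have hcos : cos γ < 0 := cos_neg_of_pi_div_two_lt_of_lt hγ₁ (by linarith)
  have hcos_φ : 0 < cos φ := cos_pos_of_mem_Ioo ⟨by linarith, by linarith⟩
  have hcos_sub : cos (γ - φ) ≤ 0 :=
    cos_nonpos_of_pi_div_two_le_of_le (by linarith) (by linarith)
  have hscaled : sin γ * (sin φ * a + cos φ * (cos γ / sin γ * (a + 1))) =
      a * cos (γ - φ) + cos γ * cos φ := by
    rw [cos_sub]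
    field_simp
    ring
  have hneg : a * cos (γ - φ) + cos γ * cos φ < 0 := by
    nlinarith [mul_nonpos_of_nonneg_of_nonpos ha hcos_sub]
  rw [← hscaled] at hneg
  exact (pos_iff_neg_of_mul_neg hneg).1 hsin

lemma Tmap_snd_sub_neg {γ φ α : ℝ} (hγ : γ ∈ Ioo (π / 2) π) (hφ : φ ∈ Icc 0 (γ - π / 2))
    (hα : 0 ≤ α) :
    (Tmap γ φ ((α + 1, 1) - (1, -cos γ / sin γ * (α + 1) + 1))).2 < 0 := by
  have h := sin_mul_add_cos_mul_cos_div_sin_neg hγ hφ hα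
  simp only [Tmap, Prod.mk_sub_mk]
  convert h using 1
  ring

/-- for `γ ∈ (π/2, π)` and `α ≥ 1`, there is an instance with exactly two
solutions in which `x₁` is optimal with respect to `≤_γ^φ` for every `φ ∈ [0, γ - π/2]`,
but `{x₁}` is not an `α`-approximation. -/
theorem stmt_6 (γ α : ℝ) (hγ : γ ∈ Set.Ioo (Real.pi/2) Real.pi) (hα : 1 ≤ α) :
    ∃ f : Fin 2 → ℝ × ℝ,
      (∀ x, 0 < (f x).1 ∧ 0 < (f x).2) ∧
      f 0 = (α + 1, 1) ∧
      f 1 = (1, (-Real.cos γ / Real.sin γ) * (α + 1) + 1) ∧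
      (∀ φ ∈ Set.Icc 0 (γ - Real.pi/2), OptimalWrt γ φ f 0) ∧
      ¬ IsApprox α f {0} := by
  refine ⟨![(α + 1, 1), (1, -cos γ / sin γ * (α + 1) + 1)], ?_, rfl, rfl, ?_, ?_⟩
  · intro x
    fin_cases x
    · exact ⟨show 0 < α + 1 by linarith, one_pos⟩
    · exact ⟨one_pos, add_pos (mul_pos (neg_cos_div_sin_pos hγ) (by linarith)) one_pos⟩
  · rintro φ hφ ⟨x', hne, hle⟩
    fin_cases x'
    · exact hne rfl
    · exact (Tmap_snd_sub_neg hγ hφ (by linarith)).not_ge hle.2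
  · intro h
    obtain ⟨x', rfl, h₁, -⟩ := h 1
    exact absurd h₁ (by simp)
end
end

section
/- Let (X, f) be an instance of a biobjective minimization problem, let α ≥ 1 and w₁, w₂ > 0. Suppose x ∈ X satisfies max{w₁·f₁(x), w₂·f₂(x)} ≤ α·max{w₁·f₁(x''), w₂·f₂(x'')} for all x'' ∈ X, and x' ∈ X satisfies w₁·f₁(x') = w₂·f₂(x'). Then f₁(x) ≤ α·f₁(x') and f₂(x) ≤ α·f₂(x'), i.e., x' is α-approximated by x with respect to the componentwise order ≤. -/
open Real Set Pointwise

noncomputable section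

theorem stmt_7_general (X : Type) (f : X → ℝ × ℝ)
    (α w₁ w₂ : ℝ) (hw₁ : 0 < w₁) (hw₂ : 0 < w₂)
    (x x' : X)
    (hx : ∀ x'' : X, max (w₁ * (f x).1) (w₂ * (f x).2) ≤
      α * max (w₁ * (f x'').1) (w₂ * (f x'').2))
    (hx' : w₁ * (f x').1 = w₂ * (f x').2) :
    (f x).1 ≤ α * (f x').1 ∧ (f x).2 ≤ α * (f x').2 := by
  have h := hx x'
  rw [hx', max_self] at h
  have h₁ : w₁ * (f x).1 ≤ w₁ * (α * (f x').1) :=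
    calc w₁ * (f x).1 ≤ α * (w₂ * (f x').2) := le_of_max_le_left h
      _ = w₁ * (α * (f x').1) := by rw [← hx']; ring
  have h₂ : w₂ * (f x).2 ≤ w₂ * (α * (f x').2) :=
    calc w₂ * (f x).2 ≤ α * (w₂ * (f x').2) := le_of_max_le_right h
      _ = w₂ * (α * (f x').2) := by ring
  exact ⟨le_of_mul_le_mul_left h₁ hw₁, le_of_mul_le_mul_left h₂ hw₂⟩

/-- if `x` is `α`-approximate for the weighted max-ordering scalarization
with weights `w₁, w₂ > 0` and `w₁ · f₁(x') = w₂ · f₂(x')`, then `x'` is `α`-approximated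
by `x` with respect to the componentwise order. -/
theorem stmt_7 (X : Type) (hX : Nonempty X) (f : X → ℝ × ℝ)
    (hf : ∀ x, 0 < (f x).1 ∧ 0 < (f x).2)
    (α w₁ w₂ : ℝ) (hα : 1 ≤ α) (hw₁ : 0 < w₁) (hw₂ : 0 < w₂)
    (x x' : X)
    (hx : ∀ x'' : X, max (w₁ * (f x).1) (w₂ * (f x).2) ≤
      α * max (w₁ * (f x'').1) (w₂ * (f x'').2))
    (hx' : w₁ * (f x').1 = w₂ * (f x').2) :
    (f x).1 ≤ α * (f x').1 ∧ (f x).2 ≤ α * (f x').2 :=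
  stmt_7_general X f α w₁ w₂ hw₁ hw₂ x x' hx hx'
end
end

section
/- Let γ ∈ [π/2, π], φ ∈ [0, γ − π/2] \ {γ − π, π/2}, α ≥ 1, and let (X, f) be an instance of a biobjective minimization problem. If x' ∈ X is α-approximated by x ∈ X with respect to ≤_γ^φ, then f₁(x) ≤ β·f₁(x') and f₂(x) ≤ β·f₂(x') for β := α·(1 + max{(f₁(x')/f₂(x'))·tan(φ), (f₂(x')/f₁(x'))·tan(φ')}), where φ' = γ − π/2 − φ. -/
open Real Set Pointwise

noncomputable section

/-! Both `φ` and `φ' = γ - π/2 - φ` lie in `[0, π/2)`, so their cosines are positive and their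
sines nonnegative. The first coordinate of `T_γ^φ (α f(x') - f(x)) ≥ 0` is
`cos φ' (α f₁(x') - f₁(x)) + sin φ' (α f₂(x') - f₂(x)) ≥ 0`; dropping `sin φ' f₂(x) ≥ 0` and dividing
by `cos φ'` gives `f₁(x) ≤ α f₁(x') (1 + (f₂(x')/f₁(x')) tan φ')`. The second coordinate is
symmetric, with `φ` in place of `φ'`. -/

theorem mem_Ico_of_mem_PhiDomain {γ φ : ℝ} (hγ : γ ≤ π) (hφ : φ ∈ PhiDomain γ) :
    φ ∈ Ico 0 (π / 2) := by
  obtain ⟨⟨hφ0, hφγ⟩, hφne⟩ := hφ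
  have hφπ : φ ≠ π / 2 := fun h => hφne (by simp [h])
  exact ⟨hφ0, lt_of_le_of_ne (by linarith) hφπ⟩

theorem sub_mem_Ico_of_mem_PhiDomain {γ φ : ℝ} (hγ : γ ≤ π) (hφ : φ ∈ PhiDomain γ) :
    γ - π / 2 - φ ∈ Ico 0 (π / 2) := by
  obtain ⟨⟨hφ0, hφγ⟩, hφne⟩ := hφ
  have hφγπ : φ ≠ γ - π := fun h => hφne (by simp [h])
  refine ⟨by linarith, lt_of_le_of_ne (by linarith) fun h => hφγπ ?_⟩
  linarith

theorem cos_pos_of_mem_Ico {θ : ℝ} (hθ : θ ∈ Ico 0 (π / 2)) : 0 < cos θ :=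
  cos_pos_of_mem_Ioo ⟨by linarith [pi_pos, hθ.1], hθ.2⟩

theorem sin_nonneg_of_mem_Ico {θ : ℝ} (hθ : θ ∈ Ico 0 (π / 2)) : 0 ≤ sin θ :=
  sin_nonneg_of_nonneg_of_le_pi hθ.1 (by linarith [pi_pos, hθ.2])

theorem le_add_mul_tan_of_cos_mul_add_sin_mul {θ y₁ y₂ z₁ z₂ : ℝ} (hθ : θ ∈ Ico 0 (π / 2))
    (hy₂ : 0 ≤ y₂) (h : 0 ≤ cos θ * (z₁ - y₁) + sin θ * (z₂ - y₂)) :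
    y₁ ≤ z₁ + z₂ * tan θ := by
  have hcos := cos_pos_of_mem_Ico hθ
  have hsin := sin_nonneg_of_mem_Ico hθ
  rw [tan_eq_sin_div_cos, ← sub_le_iff_le_add', mul_div_assoc', le_div_iff₀ hcos]
  nlinarith [mul_nonneg hsin hy₂]

theorem leC.fst_le_add_mul_tan {γ φ : ℝ} {y z : ℝ × ℝ} (hφ' : γ - π / 2 - φ ∈ Ico 0 (π / 2))
    (hy : 0 ≤ y.2) (h : leC γ φ y z) : y.1 ≤ z.1 + z.2 * tan (γ - π / 2 - φ) := by
  refine le_add_mul_tan_of_cos_mul_add_sin_mul hφ' hy ?_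
  have h₁ := h.1
  simp only [Tmap, Prod.snd_sub, Prod.fst_sub] at h₁
  linarith

theorem leC.snd_le_add_mul_tan {γ φ : ℝ} {y z : ℝ × ℝ} (hφ : φ ∈ Ico 0 (π / 2))
    (hy : 0 ≤ y.1) (h : leC γ φ y z) : y.2 ≤ z.2 + z.1 * tan φ := by
  refine le_add_mul_tan_of_cos_mul_add_sin_mul hφ hy ?_
  have h₂ := h.2
  simp only [Tmap, Prod.snd_sub, Prod.fst_sub] at h₂
  linarith

theorem mul_add_mul_mul_le_mul_one_add_mul {α p q r M : ℝ} (hα : 0 ≤ α) (hp : 0 < p)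
    (hM : q / p * r ≤ M) : α * p + α * q * r ≤ α * (1 + M) * p := by
  calc α * p + α * q * r = α * (1 + q / p * r) * p := by field_simp
    _ ≤ α * (1 + M) * p := by gcongr

theorem stmt_8_general (γ φ α : ℝ) (hγ : γ ∈ Set.Icc (Real.pi/2) Real.pi)
    (hφ : φ ∈ PhiDomain γ) (hα : 1 ≤ α)
    (X : Type) (f : X → ℝ × ℝ)
    (hf : ∀ x, 0 < (f x).1 ∧ 0 < (f x).2)
    (x x' : X) (h : leC γ φ (f x) (α • f x'))
    (β : ℝ)
    (hβ : β = α * (1 + max ((f x').1 / (f x').2 * Real.tan φ)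
      ((f x').2 / (f x').1 * Real.tan (γ - Real.pi/2 - φ)))) :
    (f x).1 ≤ β * (f x').1 ∧ (f x).2 ≤ β * (f x').2 := by
  have hα₀ : 0 ≤ α := by linarith
  obtain ⟨hx₁, hx₂⟩ := hf x
  obtain ⟨hx'₁, hx'₂⟩ := hf x'
  subst hβ
  constructor
  · calc (f x).1 ≤ α * (f x').1 + α * (f x').2 * tan (γ - π / 2 - φ) := by
          simpa [mul_assoc] using
            h.fst_le_add_mul_tan (sub_mem_Ico_of_mem_PhiDomain hγ.2 hφ) hx₂.le
      _ ≤ _ := mul_add_mul_mul_le_mul_one_add_mul hα₀ hx'₁ (le_max_right _ _)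
  · calc (f x).2 ≤ α * (f x').2 + α * (f x').1 * tan φ := by
          simpa [mul_assoc] using h.snd_le_add_mul_tan (mem_Ico_of_mem_PhiDomain hγ.2 hφ) hx₁.le
      _ ≤ _ := mul_add_mul_mul_le_mul_one_add_mul hα₀ hx'₂ (le_max_left _ _)

/-- if `x'` is `α`-approximated by `x` with respect to `≤_γ^φ`, then `x`
approximates `x'` componentwise with factor
`α · (1 + max{(f₁(x')/f₂(x'))·tan φ, (f₂(x')/f₁(x'))·tan φ'})`. -/
theorem stmt_8 (γ φ α : ℝ) (hγ : γ ∈ Set.Icc (Real.pi/2) Real.pi)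
    (hφ : φ ∈ PhiDomain γ) (hα : 1 ≤ α)
    (X : Type) (hX : Nonempty X) (f : X → ℝ × ℝ)
    (hf : ∀ x, 0 < (f x).1 ∧ 0 < (f x).2)
    (x x' : X) (h : leC γ φ (f x) (α • f x'))
    (β : ℝ)
    (hβ : β = α * (1 + max ((f x').1 / (f x').2 * Real.tan φ)
      ((f x').2 / (f x').1 * Real.tan (γ - Real.pi/2 - φ)))) :
    (f x).1 ≤ β * (f x').1 ∧ (f x).2 ≤ β * (f x').2 :=
  stmt_8_general γ φ α hγ hφ hα X f hf x x' h β hβ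
end
end

section
/- Let α ≥ 1, γ ∈ (π/2, π], φ ∈ (0, γ − π/2), and let (X, f) be an instance of a biobjective minimization problem. Set w₁ := √(sin φ)/√(cos φ') + √(cos φ)/√(sin φ') and w₂ := √(sin φ')/√(cos φ) + √(cos φ')/√(sin φ), where φ' = γ − π/2 − φ. If x ∈ X is α-approximate for the weighted max-ordering scalarization of I_γ^φ with weights w₁, w₂, then every x' ∈ X with f₁(x')/f₂(x') = √(tan φ')/√(tan φ) is α-approximated by x with respect to ≤_γ^φ. -/
open Real Set Pointwise

noncomputable section

/-! The ratio condition on `f x'` is exactly what balances the two weighted objectives of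
the transformed image, `w₁ g₁(x') = w₂ g₂(x')`. The max-ordering bound for `x` against `x'`
then splits into the componentwise bounds `gᵢ(x) ≤ α gᵢ(x')`, and since `T_γ^φ` is linear
these say `f(x) ≤_γ^φ α f(x')`. -/

lemma leC_smul_iff (γ φ c : ℝ) (y y' : ℝ × ℝ) :
    leC γ φ y (c • y') ↔
      (Tmap γ φ y).1 ≤ c * (Tmap γ φ y').1 ∧ (Tmap γ φ y).2 ≤ c * (Tmap γ φ y').2 := by
  simp only [leC, coneC, Tmap, mem_ofPred_eq, Prod.fst_sub, Prod.snd_sub, Prod.smul_fst,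
    Prod.smul_snd, smul_eq_mul]
  constructor <;> rintro ⟨h₁, h₂⟩ <;> constructor <;> linarith

lemma le_mul_of_max_le_mul_max {w₁ w₂ α u₁ u₂ v₁ v₂ : ℝ} (hw₁ : 0 < w₁) (hw₂ : 0 < w₂)
    (hv : w₁ * v₁ = w₂ * v₂) (h : max (w₁ * u₁) (w₂ * u₂) ≤ α * max (w₁ * v₁) (w₂ * v₂)) :
    u₁ ≤ α * v₁ ∧ u₂ ≤ α * v₂ := by
  rw [hv, max_self] at h
  constructor
  · refine le_of_mul_le_mul_left ?_ hw₁
    calc w₁ * u₁ ≤ α * (w₂ * v₂) := (le_max_left _ _).trans h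
      _ = w₁ * (α * v₁) := by rw [← hv]; ring
  · refine le_of_mul_le_mul_left ?_ hw₂
    calc w₂ * u₂ ≤ α * (w₂ * v₂) := (le_max_right _ _).trans h
      _ = w₂ * (α * v₂) := by ring

lemma weights_balance {s₁ c₁ s₂ c₂ a₁ a₂ : ℝ} (hs₁ : 0 < s₁) (hc₁ : 0 < c₁) (hs₂ : 0 < s₂)
    (hc₂ : 0 < c₂) (ha : a₁ / a₂ = √(s₂ / c₂) / √(s₁ / c₁)) :
    (√s₁ / √c₂ + √c₁ / √s₂) * (c₂ * a₁ + s₂ * a₂) =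
      (√s₂ / √c₁ + √c₂ / √s₁) * (s₁ * a₁ + c₁ * a₂) := by
  rw [sqrt_div hs₂.le, sqrt_div hs₁.le] at ha
  have hp := sqrt_pos.2 hs₁
  have hq := sqrt_pos.2 hc₁
  have hr := sqrt_pos.2 hs₂
  have ht := sqrt_pos.2 hc₂
  have hp₂ := sq_sqrt hs₁.le
  have hq₂ := sq_sqrt hc₁.le
  have hr₂ := sq_sqrt hs₂.le
  have ht₂ := sq_sqrt hc₂.le
  generalize √s₁ = p at *
  generalize √c₁ = q at *
  generalize √s₂ = r at *
  generalize √c₂ = t at *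
  subst hp₂ hq₂ hr₂ ht₂
  have ha₂ : a₂ ≠ 0 := by
    rintro rfl
    rw [div_zero, eq_comm] at ha
    exact (by positivity : r / t / (p / q) ≠ 0) ha
  have hcross : a₁ * (t * p) = a₂ * (r * q) := by
    field_simp at ha
    linear_combination ha
  -- both weights have numerator `p r + q t`; after cancelling it the difference of the two
  -- sides factors as `(q t - p r) (a₁ t p - a₂ r q)`
  field_simp
  linear_combination (q * t - p * r) * hcross

lemma sin_pos_and_cos_pos {θ : ℝ} (hθ : θ ∈ Ioo 0 (π / 2)) : 0 < sin θ ∧ 0 < cos θ :=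
  ⟨sin_pos_of_pos_of_lt_pi hθ.1 (by linarith [hθ.2, pi_pos]),
    cos_pos_of_mem_Ioo ⟨by linarith [hθ.1, pi_pos], hθ.2⟩⟩

lemma wOne_pos {γ φ : ℝ} (hφ : φ ∈ Ioo 0 (π / 2)) (hψ : γ - π / 2 - φ ∈ Ioo 0 (π / 2)) :
    0 < wOne γ φ :=
  add_pos_of_pos_of_nonneg
    (div_pos (sqrt_pos.2 (sin_pos_and_cos_pos hφ).1) (sqrt_pos.2 (sin_pos_and_cos_pos hψ).2))
    (by positivity)

lemma wTwo_pos {γ φ : ℝ} (hφ : φ ∈ Ioo 0 (π / 2)) (hψ : γ - π / 2 - φ ∈ Ioo 0 (π / 2)) :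
    0 < wTwo γ φ :=
  add_pos_of_pos_of_nonneg
    (div_pos (sqrt_pos.2 (sin_pos_and_cos_pos hψ).1) (sqrt_pos.2 (sin_pos_and_cos_pos hφ).2))
    (by positivity)

lemma wOne_mul_Tmap_fst_eq {γ φ : ℝ} (hφ : φ ∈ Ioo 0 (π / 2))
    (hψ : γ - π / 2 - φ ∈ Ioo 0 (π / 2)) {y : ℝ × ℝ}
    (hy : y.1 / y.2 = √(tan (γ - π / 2 - φ)) / √(tan φ)) :
    wOne γ φ * (Tmap γ φ y).1 = wTwo γ φ * (Tmap γ φ y).2 := by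
  rw [tan_eq_sin_div_cos, tan_eq_sin_div_cos] at hy
  obtain ⟨hs₁, hc₁⟩ := sin_pos_and_cos_pos hφ
  obtain ⟨hs₂, hc₂⟩ := sin_pos_and_cos_pos hψ
  exact weights_balance hs₁ hc₁ hs₂ hc₂ hy

theorem stmt_10_general (α γ φ φ' : ℝ) (hγ : γ ∈ Set.Ioc (Real.pi/2) Real.pi)
    (hφ : φ ∈ Set.Ioo 0 (γ - Real.pi/2)) (hφ' : φ' = γ - Real.pi/2 - φ)
    (X : Type) (f : X → ℝ × ℝ)
    (x : X) (hx : MaxOrdApprox α (wOne γ φ) (wTwo γ φ) γ φ f x) :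
    ∀ x' : X, (f x').1 / (f x').2 = Real.sqrt (Real.tan φ') / Real.sqrt (Real.tan φ) →
      leC γ φ (f x) (α • f x') := by
  intro x' hratio
  subst hφ'
  have hφ₀ : φ ∈ Ioo 0 (π / 2) := ⟨hφ.1, by linarith [hφ.2, hγ.2]⟩
  have hψ : γ - π / 2 - φ ∈ Ioo 0 (π / 2) := ⟨by linarith [hφ.2], by linarith [hφ.1, hγ.2]⟩
  rw [leC_smul_iff]
  exact le_mul_of_max_le_mul_max (wOne_pos hφ₀ hψ) (wTwo_pos hφ₀ hψ)
    (wOne_mul_Tmap_fst_eq hφ₀ hψ hratio) (hx x')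

/-- an `α`-approximate solution `x` for the weighted max-ordering
scalarization of `I_γ^φ` with weights `w₁, w₂` `α`-approximates, with respect to
`≤_γ^φ`, every `x'` with `f₁(x')/f₂(x') = √(tan φ')/√(tan φ)`. -/
theorem stmt_10 (α γ φ φ' : ℝ) (hα : 1 ≤ α) (hγ : γ ∈ Set.Ioc (Real.pi/2) Real.pi)
    (hφ : φ ∈ Set.Ioo 0 (γ - Real.pi/2)) (hφ' : φ' = γ - Real.pi/2 - φ)
    (X : Type) (hX : Nonempty X) (f : X → ℝ × ℝ)
    (hf : ∀ x, 0 < (f x).1 ∧ 0 < (f x).2)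
    (x : X) (hx : MaxOrdApprox α (wOne γ φ) (wTwo γ φ) γ φ f x) :
    ∀ x' : X, (f x').1 / (f x').2 = Real.sqrt (Real.tan φ') / Real.sqrt (Real.tan φ) →
      leC γ φ (f x) (α • f x') :=
  stmt_10_general α γ φ φ' hγ hφ hφ' X f x hx
end
end

section
/- Let γ ∈ (π/2, π] and φ ∈ (0, γ − π/2), and set φ' := γ − π/2 − φ and s := (1/2)·(√(tan φ)/√(tan φ') + √(tan φ')/√(tan φ)). Then √(tan φ)·√(tan φ') = √(1 + s²·(tan γ)²) + s·tan γ. -/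
open Real Set Pointwise

noncomputable section

/-! With `a = √(tan φ)` and `b = √(tan φ')`, the relation `γ = φ + φ' + π/2` gives
`tan γ = -cot (φ + φ') = (a²b² - 1)/(a² + b²)`, while `s = (a² + b²)/(2ab)`. Then
`1 + s² tan² γ = ((1 + a²b²)/(2ab))²`, and the claim becomes an identity of rational functions. -/

theorem Real.tan_add_add_pi_div_two {x y : ℝ} (hx : cos x ≠ 0) (hy : cos y ≠ 0)
    (hxy : sin (x + y) ≠ 0) :
    tan (x + y + π / 2) = (tan x * tan y - 1) / (tan x + tan y) := by
  have hxy' := sin_add x y ▸ hxy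
  rw [tan_eq_sin_div_cos, sin_add_pi_div_two, cos_add_pi_div_two, tan_eq_sin_div_cos,
    tan_eq_sin_div_cos, cos_add, sin_add]
  field_simp
  ring

theorem mul_eq_sqrt_one_add_sq_mul_sq_add_mul {a b s t : ℝ} (ha : 0 < a) (hb : 0 < b)
    (hs : s = (a ^ 2 + b ^ 2) / (2 * a * b)) (ht : t = (a ^ 2 * b ^ 2 - 1) / (a ^ 2 + b ^ 2)) :
    a * b = √(1 + s ^ 2 * t ^ 2) + s * t := by
  have hsum : a ^ 2 + b ^ 2 ≠ 0 := by positivity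
  have hsq : 1 + s ^ 2 * t ^ 2 = ((1 + a ^ 2 * b ^ 2) / (2 * a * b)) ^ 2 := by
    rw [hs, ht]
    field_simp
    ring
  rw [hsq, sqrt_sq (by positivity), hs, ht]
  field_simp
  ring

/-- with `s = (1/2)·(√(tan φ)/√(tan φ') + √(tan φ')/√(tan φ))`, one has
`√(tan φ)·√(tan φ') = √(1 + s²·(tan γ)²) + s·tan γ`. -/
theorem stmt_13 (γ φ φ' s : ℝ) (hγ : γ ∈ Set.Ioc (Real.pi/2) Real.pi)
    (hφ : φ ∈ Set.Ioo 0 (γ - Real.pi/2)) (hφ' : φ' = γ - Real.pi/2 - φ)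
    (hs : s = (1/2) * (Real.sqrt (Real.tan φ) / Real.sqrt (Real.tan φ') +
      Real.sqrt (Real.tan φ') / Real.sqrt (Real.tan φ))) :
    Real.sqrt (Real.tan φ) * Real.sqrt (Real.tan φ') =
      Real.sqrt (1 + s^2 * (Real.tan γ)^2) + s * Real.tan γ := by
  obtain ⟨hγ₁, hγ₂⟩ := hγ
  obtain ⟨hφ₁, hφ₂⟩ := hφ
  have hφ'₁ : 0 < φ' := by linarith
  have hφ'₂ : φ' < π / 2 := by linarith [pi_pos]
  have htan : 0 < tan φ := tan_pos_of_pos_of_lt_pi_div_two hφ₁ (by linarith)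
  have htan' : 0 < tan φ' := tan_pos_of_pos_of_lt_pi_div_two hφ'₁ hφ'₂
  have htanγ : tan γ = (tan φ * tan φ' - 1) / (tan φ + tan φ') := by
    rw [show γ = φ + φ' + π / 2 by linarith, tan_add_add_pi_div_two
      (cos_pos_of_mem_Ioo ⟨by linarith, by linarith⟩).ne'
      (cos_pos_of_mem_Ioo ⟨by linarith, hφ'₂⟩).ne'
      (sin_pos_of_pos_of_lt_pi (by linarith) (by linarith)).ne']
  set a := √(tan φ)
  set b := √(tan φ')
  have ha : 0 < a := sqrt_pos.mpr htan
  have hb : 0 < b := sqrt_pos.mpr htan'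
  refine mul_eq_sqrt_one_add_sq_mul_sq_add_mul ha hb ?_ ?_
  · rw [hs]
    field_simp
  · rw [htanγ, sq_sqrt htan.le, sq_sqrt htan'.le]
end
end

section
/- Let (X, f) be an instance of a biobjective minimization problem, let α ≥ 1, and let γ ∈ (π/2, π]. Let X_Q ⊆ X be a set of solutions that, for every φ ∈ (0, γ − π/2), contains an α-approximate solution for the weighted max-ordering scalarization of I_γ^φ with weights w₁ = √(sin φ)/√(cos φ') + √(cos φ)/√(sin φ') and w₂ = √(sin φ')/√(cos φ) + √(cos φ')/√(sin φ), where φ' = γ − π/2 − φ. Then X_Q is an (α·(1 + tan(γ/2 − π/4)))-approximation with respect to the componentwise order ≤. -/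
open Real Set Pointwise

noncomputable section

/-!
Fix `x` with `f x = (a, b)` and put `δ = γ - π/2`, `T = tan (δ/2)`. By the intermediate value
theorem there is `φ ∈ (0, δ)`, with `φ' = δ - φ`, such that
`a² sin φ cos φ' = b² cos φ sin φ'`. For this `φ` the two weighted objectives
`w₁ g₁(x)` and `w₂ g₂(x)` coincide, so the max-ordering value of `x` is either one of them.
The same balance, together with `tan φ tan φ' ≤ tan² (δ/2)`, gives `sin φ' b ≤ T cos φ' a` and
`sin φ a ≤ T cos φ b`, that is `g₁(x) ≤ (1 + T) cos φ' a` and `g₂(x) ≤ (1 + T) cos φ b`.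
An `α`-approximate `x'` for this `φ` then satisfies
`w₁ cos φ' f₁(x') ≤ w₁ g₁(x') ≤ α w₁ g₁(x) ≤ α (1 + T) w₁ cos φ' a`, and likewise for `f₂`.
-/

lemma exists_balanced_angle {a b δ : ℝ} (ha : 0 < a) (hb : 0 < b) (hδ₀ : 0 < δ)
    (hδπ : δ < π) :
    ∃ φ ∈ Ioo 0 δ, a ^ 2 * (sin φ * cos (δ - φ)) = b ^ 2 * (cos φ * sin (δ - φ)) := by
  have hsin : 0 < sin δ := sin_pos_of_pos_of_lt_pi hδ₀ hδπ
  have hcont : ContinuousOn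
      (fun φ => a ^ 2 * (sin φ * cos (δ - φ)) - b ^ 2 * (cos φ * sin (δ - φ))) (Icc 0 δ) := by
    fun_prop
  obtain ⟨φ, hφ, hzero⟩ := intermediate_value_Ioo hδ₀.le hcont
    (show (0 : ℝ) ∈ Ioo _ _ by constructor <;> simp <;> positivity)
  exact ⟨φ, hφ, sub_eq_zero.mp hzero⟩

lemma sin_mul_sin_le_tan_sq_mul_cos_mul_cos (φ φ' : ℝ) (h : 0 ≤ cos (φ + φ')) :
    sin φ * sin φ' ≤ tan ((φ + φ') / 2) ^ 2 * (cos φ * cos φ') := by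
  set δ := φ + φ'
  have hcos_half : cos (δ / 2) ^ 2 = (1 + cos δ) / 2 := by
    rw [cos_sq, show 2 * (δ / 2) = δ by ring]; ring
  have htan : tan (δ / 2) ^ 2 * (1 + cos δ) = 1 - cos δ := by
    have hne : cos (δ / 2) ^ 2 ≠ 0 := by rw [hcos_half]; positivity
    rw [tan_eq_sin_div_cos, div_pow, div_mul_eq_mul_div, div_eq_iff hne, sin_sq, hcos_half]
    ring
  -- with `p = cos φ cos φ'` and `q = sin φ sin φ'` this is `(p - q) (1 - (p + q)) ≥ 0`
  have hsub : cos φ * cos φ' + sin φ * sin φ' ≤ 1 := cos_sub φ φ' ▸ cos_le_one _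
  have hadd : cos δ = cos φ * cos φ' - sin φ * sin φ' := cos_add φ φ'
  refine le_of_mul_le_mul_right (a := 1 + cos δ) ?_ (by positivity)
  rw [mul_right_comm _ (cos φ * cos φ'), htan, hadd]
  nlinarith [mul_nonneg h (sub_nonneg.mpr hsub)]

lemma mul_le_mul_mul_of_balanced {a b s c s' c' t : ℝ} (ha : 0 ≤ a) (hc : 0 < c)
    (hc' : 0 ≤ c') (ht : 0 ≤ t) (hbal : a ^ 2 * (s * c') = b ^ 2 * (c * s'))
    (hkey : s * s' ≤ t ^ 2 * (c * c')) :
    s' * b ≤ t * (c' * a) := by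
  have hsq : c * (s' * b) ^ 2 ≤ c * (t * (c' * a)) ^ 2 := by
    calc c * (s' * b) ^ 2 = a ^ 2 * c' * (s * s') := by linear_combination (-s') * hbal
      _ ≤ a ^ 2 * c' * (t ^ 2 * (c * c')) := by gcongr
      _ = c * (t * (c' * a)) ^ 2 := by ring
  exact le_of_sq_le_sq (le_of_mul_le_mul_left hsq hc) (by positivity)

lemma sqrt_weights_mul_eq_of_balanced {a b s c s' c' : ℝ} (ha : 0 ≤ a) (hb : 0 ≤ b) (hs : 0 < s)
    (hc : 0 < c) (hs' : 0 < s') (hc' : 0 < c') (hbal : a ^ 2 * (s * c') = b ^ 2 * (c * s')) :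
    (√s / √c' + √c / √s') * (c' * a + s' * b) = (√s' / √c + √c' / √s) * (s * a + c * b) := by
  obtain ⟨S, hS, rfl⟩ : ∃ S, 0 < S ∧ s = S ^ 2 := ⟨√s, sqrt_pos.2 hs, (sq_sqrt hs.le).symm⟩
  obtain ⟨C, hC, rfl⟩ : ∃ C, 0 < C ∧ c = C ^ 2 := ⟨√c, sqrt_pos.2 hc, (sq_sqrt hc.le).symm⟩
  obtain ⟨S', hS', rfl⟩ : ∃ S', 0 < S' ∧ s' = S' ^ 2 :=
    ⟨√s', sqrt_pos.2 hs', (sq_sqrt hs'.le).symm⟩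
  obtain ⟨C', hC', rfl⟩ : ∃ C', 0 < C' ∧ c' = C' ^ 2 :=
    ⟨√c', sqrt_pos.2 hc', (sq_sqrt hc'.le).symm⟩
  have hroot : a * (S * C') = b * (C * S') :=
    (sq_eq_sq₀ (by positivity) (by positivity)).mp (by linear_combination hbal)
  simp only [sqrt_sq hS.le, sqrt_sq hC.le, sqrt_sq hS'.le, sqrt_sq hC'.le]
  field_simp
  linear_combination (C * C' - S * S') * hroot

lemma MaxOrdApprox.fst_le {α w₁ w₂ γ φ t : ℝ} {X : Type} {f : X → ℝ × ℝ} {x x' : X}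
    (hx' : MaxOrdApprox α w₁ w₂ γ φ f x') (hα : 0 ≤ α) (hw₁ : 0 < w₁)
    (hc : 0 < cos (γ - π / 2 - φ)) (hs : 0 ≤ sin (γ - π / 2 - φ)) (hf' : 0 ≤ (f x').2)
    (hmax : w₂ * (Tmap γ φ (f x)).2 ≤ w₁ * (Tmap γ φ (f x)).1)
    (ht : sin (γ - π / 2 - φ) * (f x).2 ≤ t * (cos (γ - π / 2 - φ) * (f x).1)) :
    (f x').1 ≤ α * (1 + t) * (f x).1 := by
  refine le_of_mul_le_mul_left (a := w₁ * cos (γ - π / 2 - φ)) ?_ (by positivity)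
  calc w₁ * cos (γ - π / 2 - φ) * (f x').1
      ≤ w₁ * (Tmap γ φ (f x')).1 := by
        rw [mul_assoc]; gcongr; exact le_add_of_nonneg_right (by positivity)
    _ ≤ max (w₁ * (Tmap γ φ (f x')).1) (w₂ * (Tmap γ φ (f x')).2) := le_max_left _ _
    _ ≤ α * (w₁ * (Tmap γ φ (f x)).1) := max_eq_left hmax ▸ hx' x
    _ ≤ α * (w₁ * ((1 + t) * (cos (γ - π / 2 - φ) * (f x).1))) := by
        gcongr; dsimp only [Tmap]; linarith
    _ = w₁ * cos (γ - π / 2 - φ) * (α * (1 + t) * (f x).1) := by ring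

lemma MaxOrdApprox.snd_le {α w₁ w₂ γ φ t : ℝ} {X : Type} {f : X → ℝ × ℝ} {x x' : X}
    (hx' : MaxOrdApprox α w₁ w₂ γ φ f x') (hα : 0 ≤ α) (hw₂ : 0 < w₂)
    (hc : 0 < cos φ) (hs : 0 ≤ sin φ) (hf' : 0 ≤ (f x').1)
    (hmax : w₁ * (Tmap γ φ (f x)).1 ≤ w₂ * (Tmap γ φ (f x)).2)
    (ht : sin φ * (f x).1 ≤ t * (cos φ * (f x).2)) :
    (f x').2 ≤ α * (1 + t) * (f x).2 := by
  refine le_of_mul_le_mul_left (a := w₂ * cos φ) ?_ (by positivity)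
  calc w₂ * cos φ * (f x').2
      ≤ w₂ * (Tmap γ φ (f x')).2 := by
        rw [mul_assoc]; gcongr; exact le_add_of_nonneg_left (by positivity)
    _ ≤ max (w₁ * (Tmap γ φ (f x')).1) (w₂ * (Tmap γ φ (f x')).2) := le_max_right _ _
    _ ≤ α * (w₂ * (Tmap γ φ (f x)).2) := max_eq_right hmax ▸ hx' x
    _ ≤ α * (w₂ * ((1 + t) * (cos φ * (f x).2))) := by
        gcongr; dsimp only [Tmap]; linarith
    _ = w₂ * cos φ * (α * (1 + t) * (f x).2) := by ring

theorem stmt_14_general (X : Type) (f : X → ℝ × ℝ)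
    (hf : ∀ x, 0 < (f x).1 ∧ 0 < (f x).2)
    (α γ : ℝ) (hα : 1 ≤ α) (hγ : γ ∈ Set.Ioc (Real.pi/2) Real.pi)
    (Q : Set X)
    (hQ : ∀ φ ∈ Set.Ioo 0 (γ - Real.pi/2),
      ∃ x ∈ Q, MaxOrdApprox α (wOne γ φ) (wTwo γ φ) γ φ f x) :
    IsApprox (α * (1 + Real.tan (γ/2 - Real.pi/4))) f Q := by
  intro x
  obtain ⟨ha, hb⟩ := hf x
  obtain ⟨hγ₁, hγ₂⟩ := hγ
  obtain ⟨φ, ⟨hφ₀, hφ₁⟩, hbal⟩ :=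
    exists_balanced_angle ha hb (by linarith : 0 < γ - π / 2) (by linarith [pi_pos])
  obtain ⟨x', hx'Q, hx'⟩ := hQ φ ⟨hφ₀, hφ₁⟩
  have hs : 0 < sin φ := sin_pos_of_pos_of_lt_pi hφ₀ (by linarith)
  have hc : 0 < cos φ := cos_pos_of_mem_Ioo ⟨by linarith, by linarith⟩
  have hs' : 0 < sin (γ - π / 2 - φ) := sin_pos_of_pos_of_lt_pi (by linarith) (by linarith)
  have hc' : 0 < cos (γ - π / 2 - φ) := cos_pos_of_mem_Ioo ⟨by linarith, by linarith⟩
  have ht : 0 ≤ tan (γ / 2 - π / 4) :=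
    tan_nonneg_of_nonneg_of_le_pi_div_two (by linarith) (by linarith)
  have hkey := sin_mul_sin_le_tan_sq_mul_cos_mul_cos φ (γ - π / 2 - φ)
    (cos_nonneg_of_mem_Icc ⟨by linarith, by linarith⟩)
  rw [show (φ + (γ - π / 2 - φ)) / 2 = γ / 2 - π / 4 by ring] at hkey
  have hw := sqrt_weights_mul_eq_of_balanced ha.le hb.le hs hc hs' hc' hbal
  have hw₁ : 0 < wOne γ φ := by unfold wOne; positivity
  have hw₂ : 0 < wTwo γ φ := by unfold wTwo; positivity
  refine ⟨x', hx'Q, ?_, ?_⟩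
  · exact hx'.fst_le (by linarith) hw₁ hc' hs'.le (hf x').2.le hw.ge
      (mul_le_mul_mul_of_balanced ha.le hc hc'.le ht hbal hkey)
  · have hsnd : sin φ * (f x).1 ≤ tan (γ / 2 - π / 4) * (cos φ * (f x).2) :=
      mul_le_mul_mul_of_balanced (s := sin (γ - π / 2 - φ)) hb.le hc' hc.le ht
        (by linear_combination -hbal)
        (by linarith)
    exact hx'.snd_le (by linarith) hw₂ hc hs.le (hf x').1.le hw.le hsnd

/-- a set containing, for every `φ ∈ (0, γ - π/2)`, an `α`-approximate
solution for the weighted max-ordering scalarization of `I_γ^φ` with weights `w₁, w₂`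
is an `(α · (1 + tan(γ/2 - π/4)))`-approximation. -/
theorem stmt_14 (X : Type) (hX : Nonempty X) (f : X → ℝ × ℝ)
    (hf : ∀ x, 0 < (f x).1 ∧ 0 < (f x).2)
    (α γ : ℝ) (hα : 1 ≤ α) (hγ : γ ∈ Set.Ioc (Real.pi/2) Real.pi)
    (Q : Set X)
    (hQ : ∀ φ ∈ Set.Ioo 0 (γ - Real.pi/2),
      ∃ x ∈ Q, MaxOrdApprox α (wOne γ φ) (wTwo γ φ) γ φ f x) :
    IsApprox (α * (1 + Real.tan (γ/2 - Real.pi/4))) f Q :=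
  stmt_14_general X f hf α γ hα hγ Q hQ

end
end

section
/- Let (X, f) be an instance of a biobjective minimization problem such that f(X) + ℝ²_≥ is closed, and let γ ∈ [π/2, π]. Then the set of γ-supported solutions is a (1 + tan(γ/2 − π/4))-approximation with respect to the componentwise order ≤. -/
/-!
Write `v = f x`, `t = tan (γ/2 - π/4)` and `φ' = γ - π/2 - φ`.

For `γ < π` the matrix of `T_γ^φ` is invertible with nonnegative entries, so a minimiser of the
sum of the components of `T_γ^φ` over `{y ∈ f(X) | T_γ^φ y ≤ T_γ^φ v}` (it exists because
`f(X) + ℝ²_≥` is closed) is optimal for `≤_γ^φ`. Choosing `φ` with `v₂ tan φ' ≤ t v₁` and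
`v₁ tan φ ≤ t v₂`, which is possible since
`arctan (t v₁/v₂) + arctan (t v₂/v₁) ≥ 2 arctan t = γ - π/2`, turns `T_γ^φ z ≤ T_γ^φ v`
into `z ≤ (1 + t) v`.

For `γ = π` the cone is a half-plane and optimality means being the unique minimiser of
`s y₁ + y₂` with `s = tan φ`. Minimisers for different slopes are ordered by their first
coordinate, so uniqueness fails for only countably many `s`, and a generic `s` slightly larger
than `v₂/v₁` has its minimiser below `2 v`.
-/

open Real Set Pointwise

noncomputable section

lemma cos_pos_and_sin_nonneg_of_mem_Icc {θ φ : ℝ} (hθ : θ < π / 2) (hφ : φ ∈ Icc 0 θ) :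
    0 < cos φ ∧ 0 ≤ sin φ :=
  ⟨cos_pos_of_mem_Ioo ⟨by linarith [hφ.1, pi_pos], by linarith [hφ.2]⟩,
    sin_nonneg_of_nonneg_of_le_pi hφ.1 (by linarith [hφ.2, pi_pos])⟩

lemma two_mul_arctan_le_arctan_add_arctan {t a b : ℝ} (ht0 : 0 ≤ t) (ht1 : t < 1)
    (ha : 0 < a) (hb : 0 < b) : 2 * arctan t ≤ arctan (t * a / b) + arctan (t * b / a) := by
  have hprod : t * a / b * (t * b / a) = t ^ 2 := by field_simp
  rw [arctan_add (by nlinarith), two_mul_arctan (by linarith) ht1, hprod]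
  refine arctan_strictMono.monotone (div_le_div_of_nonneg_right ?_ (by nlinarith))
  have hamgm : 2 ≤ a / b + b / a := by
    rw [div_add_div _ _ hb.ne' ha.ne', le_div_iff₀ (by positivity)]
    nlinarith [sq_nonneg (a - b)]
  calc 2 * t ≤ t * (a / b + b / a) := by nlinarith
    _ = t * a / b + t * b / a := by ring

lemma mul_sin_le_mul_cos_of_le_arctan {ψ p q : ℝ} (hψ : 0 ≤ ψ) (hq : 0 < q)
    (h : ψ ≤ arctan (p / q)) : q * sin ψ ≤ p * cos ψ := by
  have hψ' : ψ < π / 2 := h.trans_lt (arctan_lt_pi_div_two _)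
  have hcos : 0 < cos ψ := cos_pos_of_mem_Ioo ⟨by linarith, hψ'⟩
  have htan : tan ψ ≤ p / q := by
    rw [← tan_arctan (p / q)]
    exact strictMonoOn_tan.monotoneOn ⟨by linarith, hψ'⟩
      ⟨by linarith [neg_pi_div_two_lt_arctan (p / q)], arctan_lt_pi_div_two _⟩ h
  rw [tan_eq_sin_div_cos, div_le_div_iff₀ hcos hq] at htan
  linarith

lemma exists_angle_mul_sin_le_mul_cos {t a b : ℝ} (ht0 : 0 ≤ t) (ht1 : t < 1)
    (ha : 0 < a) (hb : 0 < b) : ∃ φ ∈ Icc 0 (2 * arctan t),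
      b * sin (2 * arctan t - φ) ≤ t * a * cos (2 * arctan t - φ) ∧
      a * sin φ ≤ t * b * cos φ := by
  have hθ : 0 ≤ 2 * arctan t := mul_nonneg zero_le_two (arctan_nonneg.2 ht0)
  set ψ := min (arctan (t * a / b)) (2 * arctan t)
  have hψ0 : 0 ≤ ψ := le_min (arctan_nonneg.2 (by positivity)) hθ
  refine ⟨2 * arctan t - ψ, ⟨sub_nonneg.2 (min_le_right _ _), by linarith⟩, ?_, ?_⟩
  · rw [sub_sub_cancel]
    exact mul_sin_le_mul_cos_of_le_arctan hψ0 hb (min_le_left _ _)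
  · refine mul_sin_le_mul_cos_of_le_arctan (sub_nonneg.2 (min_le_right _ _)) ha ?_
    have hsum := two_mul_arctan_le_arctan_add_arctan ht0 ht1 ha hb
    have hb' := arctan_nonneg.2 (by positivity : 0 ≤ t * b / a)
    rcases min_cases (arctan (t * a / b)) (2 * arctan t) with ⟨h, -⟩ | ⟨h, -⟩ <;> linarith

lemma leC_iff_Tmap_le {γ φ : ℝ} {y y' : ℝ × ℝ} : leC γ φ y y' ↔ Tmap γ φ y ≤ Tmap γ φ y' := by
  simp only [leC, coneC, Tmap, mem_ofPred_eq, Prod.le_def, Prod.fst_sub, Prod.snd_sub]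
  constructor <;> rintro ⟨h1, h2⟩ <;> constructor <;> linarith

lemma Tmap_monotone {γ φ : ℝ} (hγ : γ < π) (hφ : φ ∈ Icc 0 (γ - π / 2)) :
    Monotone (Tmap γ φ) := by
  intro y y' h
  obtain ⟨h1, h2⟩ := Prod.le_def.1 h
  have hθ : γ - π / 2 < π / 2 := by linarith
  obtain ⟨hcos', hsin'⟩ := cos_pos_and_sin_nonneg_of_mem_Icc hθ (φ := γ - π / 2 - φ)
    ⟨sub_nonneg.2 hφ.2, by linarith [hφ.1]⟩
  obtain ⟨hcos, hsin⟩ := cos_pos_and_sin_nonneg_of_mem_Icc hθ hφ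
  exact Prod.mk_le_mk.2 ⟨by gcongr, by gcongr⟩

lemma Tmap_injective {γ : ℝ} (hγ0 : 0 < γ) (hγ : γ < π) (φ : ℝ) :
    Function.Injective (Tmap γ φ) := by
  intro y y' h
  obtain ⟨e1, e2⟩ := Prod.ext_iff.1 h
  simp only [Tmap] at e1 e2
  have hdet : cos (γ - π / 2 - φ) * cos φ - sin (γ - π / 2 - φ) * sin φ ≠ 0 := by
    rw [← cos_add, sub_add_cancel]
    exact (cos_pos_of_mem_Ioo ⟨by linarith, by linarith⟩).ne'
  refine Prod.ext (mul_left_cancel₀ hdet ?_) (mul_left_cancel₀ hdet ?_)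
  · linear_combination cos φ * e1 - sin (γ - π / 2 - φ) * e2
  · linear_combination cos (γ - π / 2 - φ) * e2 - sin φ * e1

lemma Tmap_pi_arctan_le_iff (s : ℝ) {y y' : ℝ × ℝ} :
    Tmap π (arctan s) y ≤ Tmap π (arctan s) y' ↔ s * y.1 + y.2 ≤ s * y'.1 + y'.2 := by
  have hT : ∀ y : ℝ × ℝ, Tmap π (arctan s) y =
      (cos (arctan s) * (s * y.1 + y.2), cos (arctan s) * (s * y.1 + y.2)) := by
    intro y
    have hsin : sin (arctan s) = s * cos (arctan s) := by
      rw [sin_arctan, cos_arctan, mul_one_div]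
    rw [Tmap, show π - π / 2 - arctan s = π / 2 - arctan s by ring, cos_pi_div_two_sub,
      sin_pi_div_two_sub, hsin]
    ext <;> ring
  rw [hT, hT, Prod.mk_le_mk, and_self, mul_le_mul_iff_right₀ (cos_arctan_pos s)]

lemma isCompact_inter_setOf_add_le {S : Set (ℝ × ℝ)} (hS : IsClosed S) (hS0 : ∀ y ∈ S, 0 ≤ y)
    {c d : ℝ} (hc : 0 < c) (hd : 0 < d) (r : ℝ) :
    IsCompact (S ∩ {y | c * y.1 + d * y.2 ≤ r}) := by
  refine (isCompact_Icc (a := 0) (b := (r / c, r / d))).of_isClosed_subset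
    (hS.inter (isClosed_le (by fun_prop) (by fun_prop))) (fun y ⟨hyS, hy⟩ => ?_)
  obtain ⟨h1, h2⟩ := Prod.le_def.1 (hS0 y hyS)
  have hy' : c * y.1 + d * y.2 ≤ r := hy
  simp only [Prod.fst_zero, Prod.snd_zero] at h1 h2
  refine ⟨hS0 y hyS, Prod.mk_le_mk.2 ⟨?_, ?_⟩⟩
  · rw [le_div_iff₀ hc]; nlinarith
  · rw [le_div_iff₀ hd]; nlinarith

lemma exists_mem_isMinOn_of_isLowerSet {R C : Set (ℝ × ℝ)} (hR : ∀ y ∈ R, 0 ≤ y)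
    (hRc : IsClosed (R + Ici 0)) (hC : IsClosed C) (hCl : IsLowerSet C)
    {c d : ℝ} (hc : 0 < c) (hd : 0 < d) {v : ℝ × ℝ} (hv : v ∈ R ∩ C) :
    ∃ z ∈ R ∩ C, IsMinOn (fun y => c * y.1 + d * y.2) (R ∩ C) z := by
  set ℓ := fun y : ℝ × ℝ => c * y.1 + d * y.2
  have hℓ : Monotone ℓ := fun y y' h => by
    have := Prod.le_def.1 h
    dsimp only [ℓ]
    gcongr <;> tauto
  have hA0 : ∀ y ∈ R + Ici 0, 0 ≤ y := by
    rintro _ ⟨u, hu, w, hw, rfl⟩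
    exact add_nonneg (hR u hu) hw
  have hRA : R ⊆ R + Ici 0 := subset_add_left R (mem_Ici.2 le_rfl)
  obtain ⟨_, ⟨⟨⟨z, hzR, w, hw, rfl⟩, hC'⟩, hv'⟩, hmin⟩ :=
    (isCompact_inter_setOf_add_le (hRc.inter hC) (fun y hy => hA0 y hy.1) hc hd
      (ℓ v)).exists_isMinOn ⟨v, ⟨hRA hv.1, hv.2⟩, le_refl (ℓ v)⟩
      (by fun_prop : Continuous ℓ).continuousOn
  have hzw : z ≤ z + w := le_add_of_nonneg_right hw
  refine ⟨z, ⟨hzR, hCl hzw hC'⟩, fun y hy => (hℓ hzw).trans ?_⟩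
  by_cases h : ℓ y ≤ ℓ v
  · exact hmin ⟨⟨hRA hy.1, hy.2⟩, h⟩
  · exact hv'.trans (not_le.1 h).le

lemma countable_setOf_not_subsingleton_argmin (A : Set (ℝ × ℝ)) :
    {s : ℝ | ¬ {z ∈ A | IsMinOn (fun y => s * y.1 + y.2) A z}.Subsingleton}.Countable := by
  set M := fun s : ℝ => {z ∈ A | IsMinOn (fun y => s * y.1 + y.2) A z}
  have fst_anti : ∀ {s s'}, s < s' → ∀ u ∈ M s, ∀ w ∈ M s', w.1 ≤ u.1 := by
    intro s s' hss' u hu w hw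
    have h := hu.2 hw.1
    have h' := hw.2 hu.1
    dsimp only [mem_ofPred_eq] at h h'
    nlinarith
  have exists_fst_lt : ∀ s ∈ {s : ℝ | ¬ (M s).Subsingleton}, ∃ u ∈ M s, ∃ w ∈ M s, u.1 < w.1 := by
    intro s hs
    obtain ⟨u, hu, w, hw, hne⟩ := not_subsingleton_iff.1 hs
    have h := hu.2 hw.1
    have h' := hw.2 hu.1
    dsimp only [mem_ofPred_eq] at h h'
    rcases lt_trichotomy u.1 w.1 with hlt | heq | hgt
    · exact ⟨u, hu, w, hw, hlt⟩
    · exact absurd (Prod.ext heq (by rw [heq] at h h'; linarith)) hne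
    · exact ⟨w, hw, u, hu, hgt⟩
  choose! u hu w hw hlt using exists_fst_lt
  choose! q hq using fun s hs => exists_rat_btwn (hlt s hs)
  have hq_anti : StrictAntiOn q {s | ¬ (M s).Subsingleton} := by
    intro s hs s' hs' hss'
    exact_mod_cast (hq s' hs').2.trans <|
      (fst_anti hss' _ (hu s hs) _ (hw s' hs')).trans_lt (hq s hs).1
  exact (mapsTo_univ _ _).countable_of_injOn hq_anti.injOn countable_univ

lemma exists_unique_argmin_le_two_mul {R : Set (ℝ × ℝ)} (hR : ∀ y ∈ R, 0 < y.1 ∧ 0 < y.2)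
    (hRc : IsClosed (R + Ici 0)) {v : ℝ × ℝ} (hv : v ∈ R) :
    ∃ s > 0, ∃ z ∈ R, z.1 ≤ 2 * v.1 ∧ z.2 ≤ 2 * v.2 ∧
      ∀ y ∈ R, s * y.1 + y.2 ≤ s * z.1 + z.2 → y = z := by
  obtain ⟨hv1, hv2⟩ := hR v hv
  set s₀ := v.2 / v.1
  have hs₀ : 0 < s₀ := div_pos hv2 hv1
  have hv2_eq : v.2 = s₀ * v.1 := (div_mul_cancel₀ v.2 hv1.ne').symm
  have hA : ∀ y ∈ R + Ici 0, 0 < y.1 ∧ 0 < y.2 := by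
    rintro _ ⟨u, hu, w, hw, rfl⟩
    obtain ⟨hu1, hu2⟩ := hR u hu
    obtain ⟨hw1, hw2⟩ := Prod.le_def.1 (mem_Ici.1 hw)
    exact ⟨by simp only [Prod.fst_add, Prod.fst_zero] at *; linarith,
      by simp only [Prod.snd_add, Prod.snd_zero] at *; linarith⟩
  have hA0 : ∀ y ∈ R + Ici 0, 0 ≤ y := fun y hy =>
    Prod.le_def.2 ⟨(hA y hy).1.le, (hA y hy).2.le⟩
  have hRA : R ⊆ R + Ici 0 := subset_add_left R (mem_Ici.2 le_rfl)
  -- every minimiser of `s y₁ + y₂` with `s ∈ (s₀, s₀ + 1)` lies in this compact set,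
  -- so its first coordinate is at least `p.1 > 0`
  obtain ⟨p, hpK, hp⟩ := (isCompact_inter_setOf_add_le hRc hA0 hs₀ one_pos
    ((s₀ + 1) * v.1 + v.2)).exists_isMinOn ⟨v, hRA hv, by simp only [mem_ofPred_eq]; linarith⟩
    continuous_fst.continuousOn
  have hp1 := (hA p hpK.1).1
  set δ := min 1 (s₀ * p.1 / v.1)
  have hδ : 0 < δ := by positivity
  have hδ1 : δ ≤ 1 := min_le_left _ _
  have hδ2 : δ * v.1 ≤ s₀ * p.1 := (le_div_iff₀ hv1).1 (min_le_right _ _)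
  obtain ⟨s, hs_good, hs⟩ :=
    ((countable_setOf_not_subsingleton_argmin R).dense_compl ℝ).exists_between
      (lt_add_of_pos_right s₀ hδ)
  have hspos : 0 < s := hs₀.trans hs.1
  obtain ⟨z, ⟨hzR, -⟩, hzmin⟩ := exists_mem_isMinOn_of_isLowerSet (C := univ)
    (fun y hy => hA0 y (hRA hy)) hRc isClosed_univ isLowerSet_univ hspos one_pos ⟨hv, mem_univ v⟩
  simp only [inter_univ, one_mul] at hzmin
  have hzv : s * z.1 + z.2 ≤ s * v.1 + v.2 := hzmin hv
  obtain ⟨hz1, hz2⟩ := hR z hzR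
  have hs₀z := mul_le_mul_of_nonneg_right hs.1.le hz1.le
  have hs₀v := mul_le_mul_of_nonneg_right hs.1.le hv1.le
  have hsv := mul_le_mul_of_nonneg_right hs.2.le hv1.le
  have hpz : p.1 ≤ z.1 := hp ⟨hRA hzR, by simp only [mem_ofPred_eq]; nlinarith⟩
  have hpz' := mul_le_mul_of_nonneg_left hpz hs₀.le
  refine ⟨s, hspos, z, hzR, le_of_mul_le_mul_left (by linarith) hspos, by linarith,
    fun y hy hyz => ?_⟩
  exact not_not.1 hs_good ⟨hy, fun y' hy' => hyz.trans (hzmin hy')⟩ ⟨hzR, hzmin⟩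

lemma exists_optimalWrt_Tmap_le {X : Type} {f : X → ℝ × ℝ} (hf : ∀ x, 0 ≤ f x)
    (hclosed : IsClosed (range f + Ici 0)) {γ φ : ℝ} (hγ : γ < π) (hφ : φ ∈ Icc 0 (γ - π / 2))
    (x : X) : ∃ x', Tmap γ φ (f x') ≤ Tmap γ φ (f x) ∧ OptimalWrt γ φ f x' := by
  have hγ0 : 0 < γ := by linarith [hφ.1, hφ.2, pi_pos]
  have hθ : γ - π / 2 < π / 2 := by linarith
  obtain ⟨hcos', hsin'⟩ := cos_pos_and_sin_nonneg_of_mem_Icc hθ (φ := γ - π / 2 - φ)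
    ⟨sub_nonneg.2 hφ.2, by linarith [hφ.1]⟩
  obtain ⟨hcos, hsin⟩ := cos_pos_and_sin_nonneg_of_mem_Icc hθ hφ
  have hsum : ∀ y : ℝ × ℝ, (Tmap γ φ y).1 + (Tmap γ φ y).2 =
      (cos (γ - π / 2 - φ) + sin φ) * y.1 + (sin (γ - π / 2 - φ) + cos φ) * y.2 := by
    intro y; simp only [Tmap]; ring
  set C := {y | Tmap γ φ y ≤ Tmap γ φ (f x)}
  have hC : IsClosed C := isClosed_le (by unfold Tmap; fun_prop) continuous_const
  have hCl : IsLowerSet C := fun y y' hy' hy => (Tmap_monotone hγ hφ hy').trans hy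
  obtain ⟨_, ⟨⟨x', rfl⟩, hx'C⟩, hmin⟩ := exists_mem_isMinOn_of_isLowerSet
    (by rintro _ ⟨x, rfl⟩; exact hf x) hclosed hC hCl (add_pos_of_pos_of_nonneg hcos' hsin)
    (add_pos_of_nonneg_of_pos hsin' hcos)
    ⟨⟨x, rfl⟩, le_refl (Tmap γ φ (f x))⟩
  refine ⟨x', hx'C, fun ⟨x'', hne, hle⟩ => hne (Tmap_injective hγ0 hγ φ ?_)⟩
  rw [leC_iff_Tmap_le] at hle
  have h := hmin ⟨⟨x'', rfl⟩, hle.trans hx'C⟩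
  simp only [mem_ofPred_eq, ← hsum] at h
  obtain ⟨h1, h2⟩ := Prod.le_def.1 hle
  exact Prod.ext (by linarith) (by linarith)

lemma le_one_add_mul_of_add_le {c s y₁ y₂ a b t : ℝ} (hc : 0 < c) (hs : 0 ≤ s) (hy₂ : 0 ≤ y₂)
    (h : c * y₁ + s * y₂ ≤ c * a + s * b) (hb : b * s ≤ t * a * c) : y₁ ≤ (1 + t) * a := by
  nlinarith

lemma exists_gammaSupported_approx_of_lt_pi {X : Type} {f : X → ℝ × ℝ}
    (hf : ∀ x, 0 < (f x).1 ∧ 0 < (f x).2) (hclosed : IsClosed (range f + Ici 0)) {γ : ℝ}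
    (hγ : γ ∈ Ico (π / 2) π) (x : X) :
    ∃ x', GammaSupported γ f x' ∧ (f x').1 ≤ (1 + tan (γ / 2 - π / 4)) * (f x).1 ∧
      (f x').2 ≤ (1 + tan (γ / 2 - π / 4)) * (f x).2 := by
  set t := tan (γ / 2 - π / 4)
  have hhalf : γ / 2 - π / 4 ∈ Ico 0 (π / 4) := ⟨by linarith [hγ.1], by linarith [hγ.2]⟩
  have ht0 : 0 ≤ t :=
    tan_nonneg_of_nonneg_of_le_pi_div_two hhalf.1 (by linarith [hhalf.2, pi_pos])
  have ht1 : t < 1 := by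
    rw [← tan_pi_div_four]
    exact tan_lt_tan_of_nonneg_of_lt_pi_div_two hhalf.1 (by linarith [pi_pos]) hhalf.2
  have hθ : 2 * arctan t = γ - π / 2 := by
    rw [arctan_tan (by linarith [hhalf.1, pi_pos]) (by linarith [hhalf.2, pi_pos])]
    ring
  obtain ⟨φ, hφ, hb, ha⟩ := exists_angle_mul_sin_le_mul_cos ht0 ht1 (hf x).1 (hf x).2
  rw [hθ] at hφ hb
  have hθ' : γ - π / 2 < π / 2 := by linarith [hγ.2]
  obtain ⟨hcos', hsin'⟩ := cos_pos_and_sin_nonneg_of_mem_Icc hθ' (φ := γ - π / 2 - φ)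
    ⟨sub_nonneg.2 hφ.2, by linarith [hφ.1]⟩
  obtain ⟨hcos, hsin⟩ := cos_pos_and_sin_nonneg_of_mem_Icc hθ' hφ
  have hφ_dom : φ ∈ PhiDomain γ := ⟨hφ, by
    simp only [mem_insert_iff, mem_singleton_iff, not_or]
    constructor <;> intro h <;> linarith [hφ.1, hφ.2, hγ.2]⟩
  obtain ⟨x', hTle, hopt⟩ := exists_optimalWrt_Tmap_le
    (fun x => Prod.le_def.2 ⟨(hf x).1.le, (hf x).2.le⟩) hclosed hγ.2 hφ x
  obtain ⟨h1, h2⟩ := Prod.le_def.1 hTle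
  simp only [Tmap] at h1 h2
  exact ⟨x', ⟨φ, hφ_dom, hopt⟩, le_one_add_mul_of_add_le hcos' hsin' (hf x').2.le h1 hb,
    le_one_add_mul_of_add_le hcos hsin (hf x').1.le (by linarith) ha⟩

lemma exists_gammaSupported_approx_pi {X : Type} {f : X → ℝ × ℝ}
    (hf : ∀ x, 0 < (f x).1 ∧ 0 < (f x).2) (hclosed : IsClosed (range f + Ici 0)) (x : X) :
    ∃ x', GammaSupported π f x' ∧ (f x').1 ≤ 2 * (f x).1 ∧ (f x').2 ≤ 2 * (f x).2 := by
  obtain ⟨s, hs, _, ⟨x', rfl⟩, h1, h2, huniq⟩ :=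
    exists_unique_argmin_le_two_mul (by rintro _ ⟨x, rfl⟩; exact hf x) hclosed ⟨x, rfl⟩
  have h0 := arctan_pos.2 hs
  have hlt := arctan_lt_pi_div_two s
  refine ⟨x', ⟨arctan s, ⟨⟨h0.le, by linarith⟩, ?_⟩, fun ⟨x'', hne, hle⟩ => ?_⟩, h1, h2⟩
  · simp only [mem_insert_iff, mem_singleton_iff, not_or, sub_self]
    exact ⟨h0.ne', hlt.ne⟩
  · rw [leC_iff_Tmap_le, Tmap_pi_arctan_le_iff] at hle
    exact hne (huniq _ ⟨x'', rfl⟩ hle)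

theorem stmt_16_general (X : Type) (f : X → ℝ × ℝ)
    (hf : ∀ x, 0 < (f x).1 ∧ 0 < (f x).2)
    (hclosed : IsClosed (Set.range f + {y : ℝ × ℝ | 0 ≤ y.1 ∧ 0 ≤ y.2}))
    (γ : ℝ) (hγ : γ ∈ Set.Icc (Real.pi/2) Real.pi) :
    IsApprox (1 + Real.tan (γ/2 - Real.pi/4)) f {x : X | GammaSupported γ f x} := by
  intro x
  rcases hγ.2.lt_or_eq with hγπ | rfl
  · exact exists_gammaSupported_approx_of_lt_pi hf hclosed ⟨hγ.1, hγπ⟩ x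
  · rw [show π / 2 - π / 4 = π / 4 by ring, tan_pi_div_four, one_add_one_eq_two]
    exact exists_gammaSupported_approx_pi hf hclosed x

/-- the set of `γ`-supported solutions is a
`(1 + tan(γ/2 - π/4))`-approximation. -/
theorem stmt_16 (X : Type) (hX : Nonempty X) (f : X → ℝ × ℝ)
    (hf : ∀ x, 0 < (f x).1 ∧ 0 < (f x).2)
    (hclosed : IsClosed (Set.range f + {y : ℝ × ℝ | 0 ≤ y.1 ∧ 0 ≤ y.2}))
    (γ : ℝ) (hγ : γ ∈ Set.Icc (Real.pi/2) Real.pi) :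
    IsApprox (1 + Real.tan (γ/2 - Real.pi/4)) f {x : X | GammaSupported γ f x} :=
  stmt_16_general X f hf hclosed γ hγ
end
end

section
/- For every γ ∈ [π/2, π], every α ≥ 1, and every ε > 0, there exist an instance (X, f) of a biobjective minimization problem and a subset X' ⊆ X such that X' is an α-approximation with respect to ≤_γ^φ for every φ ∈ [0, γ − π/2] \ {γ − π, π/2}, but X' is not an (α·(1 + tan(γ/2 − π/4)) − ε)-approximation with respect to the componentwise order ≤. -/
open Real Set Pointwise

noncomputable section

/-!
The cone `C_γ^φ` is spanned by `(1, -tan φ)` and `(-tan φ', 1)`, and swapping coordinates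
exchanges the roles of `φ` and `φ' = γ - π/2 - φ`. Take the points `(1, 1)` and, for each
admissible `φ`, the point `α • (1, 1) - (α - s) • (1, -tan φ) = (s, α + (α - s) tan φ)` with a
small `s > 0` (for `φ < φ'`, the swapped point built from `φ'`). It `α`-approximates `(1, 1)`
with respect to `≤_γ^φ`, and each such point approximates itself because `C_γ^φ` contains the
nonnegative orthant. Since `max φ φ' ≥ γ/2 - π/4`, one coordinate of every such point exceeds
`α (1 + tan (γ/2 - π/4)) - ε`, so none of them approximates `(1, 1)` componentwise with that factor.
-/

lemma PhiDomain_subset_Ico {γ : ℝ} (hγ : γ ≤ π) : PhiDomain γ ⊆ Ico 0 (π / 2) :=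
  fun _ hφ => ⟨hφ.1.1, lt_of_le_of_ne (by linarith [hφ.1.2]) fun h => hφ.2 (Or.inr h)⟩

lemma sub_mem_PhiDomain {γ φ : ℝ} (hφ : φ ∈ PhiDomain γ) : γ - π / 2 - φ ∈ PhiDomain γ := by
  obtain ⟨⟨h₀, h₁⟩, hne⟩ := hφ
  simp only [mem_insert_iff, mem_singleton_iff, not_or] at hne
  refine ⟨⟨by linarith, by linarith⟩, ?_⟩
  simp only [mem_insert_iff, mem_singleton_iff, not_or]
  exact ⟨fun h => hne.2 (by linarith), fun h => hne.1 (by linarith)⟩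

lemma Tmap_swap (γ φ : ℝ) (y : ℝ × ℝ) :
    Tmap γ φ y.swap = (Tmap γ (γ - π / 2 - φ) y).swap := by
  simp only [Tmap, Prod.fst_swap, Prod.snd_swap, Prod.swap_prod_mk, sub_sub_cancel]
  ext <;> ring

lemma swap_mem_coneC_iff {γ φ : ℝ} {y : ℝ × ℝ} :
    y.swap ∈ coneC γ φ ↔ y ∈ coneC γ (γ - π / 2 - φ) := by
  simp only [coneC, Set.mem_ofPred_eq, Tmap_swap, Prod.fst_swap, Prod.snd_swap, and_comm]

lemma mem_coneC_of_nonneg {γ φ : ℝ} (hγ : γ ≤ π) (hφ : φ ∈ PhiDomain γ) {y : ℝ × ℝ}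
    (hy : 0 ≤ y) : y ∈ coneC γ φ := by
  have trig_nonneg : ∀ θ ∈ PhiDomain γ, 0 ≤ sin θ ∧ 0 ≤ cos θ := fun θ hθ => by
    obtain ⟨h₀, h₁⟩ := PhiDomain_subset_Ico hγ hθ
    exact ⟨sin_nonneg_of_nonneg_of_le_pi h₀ (by linarith [pi_pos]),
      cos_nonneg_of_mem_Icc ⟨by linarith [pi_pos], h₁.le⟩⟩
  obtain ⟨hs, hc⟩ := trig_nonneg φ hφ
  obtain ⟨hs', hc'⟩ := trig_nonneg _ (sub_mem_PhiDomain hφ)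
  obtain ⟨hy₁, hy₂⟩ := hy
  exact ⟨add_nonneg (mul_nonneg hc' hy₁) (mul_nonneg hs' hy₂),
    add_nonneg (mul_nonneg hs hy₁) (mul_nonneg hc hy₂)⟩

lemma leC_smul_self {γ φ α : ℝ} (hγ : γ ≤ π) (hφ : φ ∈ PhiDomain γ) (hα : 1 ≤ α)
    {y : ℝ × ℝ} (hy : 0 ≤ y) : leC γ φ y (α • y) := by
  refine mem_coneC_of_nonneg hγ hφ ?_
  rw [show α • y - y = (α - 1) • y by rw [sub_smul, one_smul]]
  exact smul_nonneg (sub_nonneg.2 hα) hy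

lemma ray_mem_coneC {γ φ t : ℝ} (hγ : 0 ≤ sin γ) (hφ : 0 < cos φ) (ht : 0 ≤ t) :
    (t, -(t * tan φ)) ∈ coneC γ φ := by
  have hsin : cos (γ - π / 2 - φ) * cos φ - sin (γ - π / 2 - φ) * sin φ = sin γ := by
    rw [← cos_add, sub_add_cancel, cos_sub_pi_div_two]
  have hfst : (Tmap γ φ (t, -(t * tan φ))).1 = t * sin γ / cos φ := by
    simp only [Tmap, tan_eq_sin_div_cos, ← hsin]
    field_simp
    ring
  have hsnd : (Tmap γ φ (t, -(t * tan φ))).2 = 0 := by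
    simp only [Tmap, tan_eq_sin_div_cos]
    field_simp
    ring
  exact ⟨hfst ▸ by positivity, hsnd.ge⟩

def tightPoint (α s θ : ℝ) : ℝ × ℝ := (s, α + (α - s) * tan θ)

lemma leC_tightPoint {γ φ α s : ℝ} (hγ : 0 ≤ sin γ) (hφ : 0 < cos φ) (hsα : s ≤ α) :
    leC γ φ (tightPoint α s φ) (α • (1, 1)) := by
  have h : α • ((1 : ℝ), (1 : ℝ)) - tightPoint α s φ = (α - s, -((α - s) * tan φ)) := by
    simp only [tightPoint, Prod.smul_mk, smul_eq_mul, mul_one, Prod.mk_sub_mk]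
    ext <;> ring
  rw [leC, h]
  exact ray_mem_coneC hγ hφ (sub_nonneg.2 hsα)

lemma tightPoint_pos {α s θ : ℝ} (hs : 0 < s) (hsα : s ≤ α) (hθ : θ ∈ Ico 0 (π / 2)) :
    0 < (tightPoint α s θ).1 ∧ 0 < (tightPoint α s θ).2 := by
  have := tan_nonneg_of_nonneg_of_le_pi_div_two hθ.1 hθ.2.le
  have := mul_nonneg (sub_nonneg.2 hsα) this
  exact ⟨hs, by simp only [tightPoint]; linarith⟩

lemma lt_tightPoint_snd {γ α s ε θ : ℝ} (hγ : π / 2 ≤ γ) (hθ₀ : γ / 2 - π / 4 ≤ θ)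
    (hθ : θ < π / 2) (hsα : s ≤ α) (hsε : s * tan (γ / 2 - π / 4) < ε) :
    α * (1 + tan (γ / 2 - π / 4)) - ε < (tightPoint α s θ).2 := by
  have htan : tan (γ / 2 - π / 4) ≤ tan θ :=
    strictMonoOn_tan.monotoneOn ⟨by linarith [pi_pos], by linarith⟩ ⟨by linarith, hθ⟩ hθ₀
  have := mul_le_mul_of_nonneg_left htan (sub_nonneg.2 hsα)
  simp only [tightPoint]
  linarith

def tightPointOf (γ α s φ : ℝ) : ℝ × ℝ :=
  if γ - π / 2 - φ ≤ φ then tightPoint α s φ else (tightPoint α s (γ - π / 2 - φ)).swap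

section tightPointOf

variable {γ α s φ : ℝ} (hγ : γ ∈ Icc (π / 2) π) (hφ : φ ∈ PhiDomain γ)
include hγ hφ

lemma leC_tightPointOf (hsα : s ≤ α) : leC γ φ (tightPointOf γ α s φ) (α • (1, 1)) := by
  have hsin : 0 ≤ sin γ := sin_nonneg_of_nonneg_of_le_pi (by linarith [hγ.1, pi_pos]) hγ.2
  have hcos : ∀ θ ∈ PhiDomain γ, 0 < cos θ := fun θ hθ => by
    obtain ⟨h₀, h₁⟩ := PhiDomain_subset_Ico hγ.2 hθ
    exact cos_pos_of_mem_Ioo ⟨by linarith [pi_pos], h₁⟩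
  unfold tightPointOf
  split_ifs
  · exact leC_tightPoint hsin (hcos φ hφ) hsα
  · rw [leC, show α • ((1 : ℝ), (1 : ℝ)) = (α • ((1 : ℝ), (1 : ℝ))).swap from rfl,
      ← Prod.swap_sub, swap_mem_coneC_iff]
    exact leC_tightPoint hsin (hcos _ (sub_mem_PhiDomain hφ)) hsα

lemma tightPointOf_pos (hs : 0 < s) (hsα : s ≤ α) :
    0 < (tightPointOf γ α s φ).1 ∧ 0 < (tightPointOf γ α s φ).2 := by
  unfold tightPointOf
  split_ifs
  · exact tightPoint_pos hs hsα (PhiDomain_subset_Ico hγ.2 hφ)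
  · exact (tightPoint_pos hs hsα (PhiDomain_subset_Ico hγ.2 (sub_mem_PhiDomain hφ))).symm

lemma lt_max_tightPointOf {ε : ℝ} (hsα : s ≤ α) (hsε : s * tan (γ / 2 - π / 4) < ε) :
    α * (1 + tan (γ / 2 - π / 4)) - ε <
      max (tightPointOf γ α s φ).1 (tightPointOf γ α s φ).2 := by
  unfold tightPointOf
  split_ifs with h
  · exact lt_max_of_lt_right (lt_tightPoint_snd hγ.1 (by linarith)
      (PhiDomain_subset_Ico hγ.2 hφ).2 hsα hsε)
  · exact lt_max_of_lt_left (lt_tightPoint_snd hγ.1 (by linarith)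
      (PhiDomain_subset_Ico hγ.2 (sub_mem_PhiDomain hφ)).2 hsα hsε)

end tightPointOf

/-- tightness: there is an instance and a subset `X'` that is an
`α`-approximation with respect to `≤_γ^φ` for every admissible `φ`, but not an
`(α·(1 + tan(γ/2 - π/4)) - ε)`-approximation with respect to `≤`. -/
theorem stmt_18 (γ α ε : ℝ) (hγ : γ ∈ Set.Icc (Real.pi/2) Real.pi)
    (hα : 1 ≤ α) (hε : 0 < ε) :
    ∃ (X : Type) (f : X → ℝ × ℝ) (X' : Set X), Nonempty X ∧
      (∀ x, 0 < (f x).1 ∧ 0 < (f x).2) ∧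
      (∀ φ ∈ PhiDomain γ, ∀ x : X, ∃ x' ∈ X', leC γ φ (f x') (α • f x)) ∧
      ¬ IsApprox (α * (1 + Real.tan (γ/2 - Real.pi/4)) - ε) f X' := by
  set β := tan (γ / 2 - π / 4)
  have hβ : 0 ≤ β := tan_nonneg_of_nonneg_of_le_pi_div_two (by linarith [hγ.1])
    (by linarith [hγ.2, pi_pos])
  set s := min α (ε / (1 + β))
  have hs : 0 < s := lt_min (by linarith) (by positivity)
  have hsα : s ≤ α := min_le_left _ _
  have hsε : s * β < ε := calc
    s * β < s * (1 + β) := by linarith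
    _ ≤ ε := (le_div_iff₀ (by positivity)).1 (min_le_right _ _)
  let f : Option (PhiDomain γ) → ℝ × ℝ := fun x => x.elim (1, 1) fun φ => tightPointOf γ α s φ
  have hf : ∀ x, 0 < (f x).1 ∧ 0 < (f x).2
    | none => ⟨one_pos, one_pos⟩
    | some φ => tightPointOf_pos hγ φ.2 hs hsα
  refine ⟨Option (PhiDomain γ), f, range some, ⟨none⟩, hf, fun φ hφ x => ?_, fun happrox => ?_⟩
  · cases x with
    | none => exact ⟨some ⟨φ, hφ⟩, mem_range_self _, leC_tightPointOf hγ hφ hsα⟩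
    | some ψ => exact ⟨some ψ, mem_range_self _,
        leC_smul_self hγ.2 hφ hα ⟨(hf (some ψ)).1.le, (hf (some ψ)).2.le⟩⟩
  · obtain ⟨_, ⟨φ, rfl⟩, h₁, h₂⟩ := happrox none
    simp only [f, Option.elim, mul_one] at h₁ h₂
    exact (lt_max_tightPointOf hγ φ.2 hsα hsε).not_ge (max_le h₁ h₂)
end
end
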